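/- arXiv:1709.01693 — 13 statements merged into one kernel-verified Lean document; each statement's English description precedes it below -/
import Mathlib

section
/- Every monoid homomorphism φ : M → N between Puiseux monoids (additive submonoids of ℚ≥0) is given by multiplication by a nonnegative rational number; that is, there exists q ∈ ℚ≥0 such that φ(x) = q·x for all x ∈ M. -/
/-- A Puiseux monoid is an additive submonoid of the nonnegative rationals. -/
def IsPuiseux (M : AddSubmonoid ℚ) : Prop := ∀ x ∈ M, 0 ≤ x

/-- Every monoid homomorphism between Puiseux monoids is given by multiplication
by a nonnegative rational number. -/
theorem stmt0 (M N : AddSubmonoid ℚ) (hM : IsPuiseux M) (hN : IsPuiseux N)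
    (φ : ↥M →+ ↥N) :
    ∃ q : ℚ, 0 ≤ q ∧ ∀ x : ↥M, (φ x : ℚ) = q * (x : ℚ) := by
  by_cases h : ∀ x : ↥M, (x : ℚ) = 0
  · refine ⟨0, le_refl 0, fun x => ?_⟩
    have hx0 : x = 0 := Subtype.ext (h x)
    simp [hx0]
  · push_neg at h
    obtain ⟨x0, hx0⟩ := h
    have hx0pos : (0:ℚ) < (x0 : ℚ) := lt_of_le_of_ne (hM _ x0.2) (Ne.symm hx0)
    refine ⟨(φ x0 : ℚ) / (x0 : ℚ), div_nonneg (hN _ (φ x0).2) hx0pos.le, fun x => ?_⟩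
    by_cases hx : (x : ℚ) = 0
    · have : x = 0 := Subtype.ext hx
      simp [this, hx]
    · have hxpos : (0:ℚ) < (x : ℚ) := lt_of_le_of_ne (hM _ x.2) (Ne.symm hx)
      set r : ℚ := (x : ℚ) / (x0 : ℚ) with hr
      have hrpos : 0 < r := div_pos hxpos hx0pos
      have hkey : (r.den : ℚ) * (x : ℚ) = (r.num.toNat : ℚ) * (x0 : ℚ) := by
        have hnum : (r.num.toNat : ℚ) = (r.num : ℚ) := by
          norm_cast
          exact Int.toNat_of_nonneg (le_of_lt (Rat.num_pos.mpr hrpos))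
        rw [hnum]
        have h1 : (r.den : ℚ) * r = (r.num : ℚ) := by
          rw [mul_comm]
          exact_mod_cast Rat.mul_den_eq_num r
        calc (r.den : ℚ) * (x : ℚ) = (r.den : ℚ) * (r * (x0 : ℚ)) := by
              rw [hr, div_mul_cancel₀ _ (ne_of_gt hx0pos)]
          _ = ((r.den : ℚ) * r) * (x0 : ℚ) := by ring
          _ = (r.num : ℚ) * (x0 : ℚ) := by rw [h1]
      -- lift to the monoid
      have hsmul : r.den • x = r.num.toNat • x0 := by
        apply Subtype.ext
        push_cast
        simpa [nsmul_eq_mul] using hkey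
      have hphi : (r.den : ℚ) * (φ x : ℚ) = (r.num.toNat : ℚ) * (φ x0 : ℚ) := by
        have := congrArg φ hsmul
        rw [map_nsmul, map_nsmul] at this
        have := congrArg (fun z : ↥N => (z : ℚ)) this
        simpa [nsmul_eq_mul] using this
      have hden : (r.den : ℚ) ≠ 0 := by positivity
      have hcross : (φ x : ℚ) * (x0 : ℚ) = (φ x0 : ℚ) * (x : ℚ) := by
        have h2 : (r.den : ℚ) * ((φ x : ℚ) * (x0 : ℚ))
            = (r.den : ℚ) * ((φ x0 : ℚ) * (x : ℚ)) := by
          calc (r.den : ℚ) * ((φ x : ℚ) * (x0 : ℚ))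
              = ((r.den : ℚ) * (φ x : ℚ)) * (x0 : ℚ) := by ring
            _ = ((r.num.toNat : ℚ) * (φ x0 : ℚ)) * (x0 : ℚ) := by rw [hphi]
            _ = (φ x0 : ℚ) * ((r.num.toNat : ℚ) * (x0 : ℚ)) := by ring
            _ = (φ x0 : ℚ) * ((r.den : ℚ) * (x : ℚ)) := by rw [← hkey]
            _ = (r.den : ℚ) * ((φ x0 : ℚ) * (x : ℚ)) := by ring
        exact mul_left_cancel₀ hden h2
      field_simp
      linarith [hcross]
end

section
/- Let r ∈ ℚ with r > 0 such that the numerator and denominator of r (in lowest terms) are both greater than 1, and let M = ⟨rⁿ | n ∈ ℤ⟩ be the additive submonoid of ℚ≥0 generated by all integer powers of r. Then the set of atoms of M equals {rⁿ | n ∈ ℤ}, and in particular M is atomic. -/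
lemma keyNat {n d : ℕ} (hn : 2 ≤ n) (hd : 2 ≤ d) (hcop : Nat.Coprime n d) :
    ∀ K : ℕ, ∀ (L : Multiset ℕ) (N : ℕ), K ≤ N → (∀ i ∈ L, i ≤ N) →
      (0 ∈ L ∨ K = 0) → 2 ≤ Multiset.card L →
      n ^ K * d ^ (N - K) ≠ (L.map (fun i => n ^ i * d ^ (N - i))).sum := by
  intro K
  induction K with
  | zero =>
    intro L N _ hLN h0 hcard heq
    simp only [pow_zero, one_mul, Nat.sub_zero] at heq
    by_cases h0L : 0 ∈ L
    · obtain ⟨L₂, rfl⟩ := Multiset.exists_cons_of_mem h0L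
      rw [Multiset.map_cons, Multiset.sum_cons, pow_zero, one_mul, Nat.sub_zero] at heq
      have hrest : (L₂.map (fun i => n ^ i * d ^ (N - i))).sum = 0 := by omega
      have hL₂ : L₂ ≠ 0 := by
        intro h; rw [h] at hcard; simp at hcard
      obtain ⟨a, ha⟩ := Multiset.exists_mem_of_ne_zero hL₂
      have hz : n ^ a * d ^ (N - a) = 0 :=
        Multiset.sum_eq_zero_iff.mp hrest (n ^ a * d ^ (N - a)) (Multiset.mem_map_of_mem _ ha)
      have hpos : 0 < n ^ a * d ^ (N - a) :=
        Nat.mul_pos (Nat.pow_pos (by omega)) (Nat.pow_pos (by omega))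
      omega
    · have hdvd : n ∣ (L.map (fun i => n ^ i * d ^ (N - i))).sum := by
        apply Multiset.dvd_sum
        intro x hx
        obtain ⟨i, hi, rfl⟩ := Multiset.mem_map.mp hx
        exact Dvd.dvd.mul_right (dvd_pow_self n (fun h => h0L (h ▸ hi))) _
      rw [← heq] at hdvd
      have := (hcop.pow_right N).eq_one_of_dvd hdvd
      omega
  | succ K ih =>
    intro L N hKN hLN h0 hcard heq
    have h0L : 0 ∈ L := h0.resolve_right (Nat.succ_ne_zero K)
    have hc1 : 1 ≤ L.count 0 := Multiset.count_pos.mpr h0L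
    have hsplit : Multiset.replicate (L.count 0) 0 + L.filter (fun i => ¬ i = 0) = L := by
      rw [← Multiset.filter_eq' L 0]
      exact Multiset.filter_add_not _ L
    have hmem₁ : ∀ i ∈ L.filter (fun i => ¬ i = 0), i ≠ 0 ∧ i ≤ N := by
      intro i hi
      rw [Multiset.mem_filter] at hi
      exact ⟨hi.2, hLN i hi.1⟩
    have hN1 : 1 ≤ N := le_trans (by omega) hKN
    have hsum : (L.map (fun i => n ^ i * d ^ (N - i))).sum
        = L.count 0 * d ^ N + ((L.filter (fun i => ¬ i = 0)).map
            (fun i => n ^ i * d ^ (N - i))).sum := by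
      conv_lhs => rw [← hsplit]
      rw [Multiset.map_add, Multiset.sum_add, Multiset.map_replicate,
        Multiset.sum_replicate]
      simp
    have hdvdS : n ∣ ((L.filter (fun i => ¬ i = 0)).map (fun i => n ^ i * d ^ (N - i))).sum := by
      apply Multiset.dvd_sum
      intro x hx
      obtain ⟨i, hi, rfl⟩ := Multiset.mem_map.mp hx
      exact Dvd.dvd.mul_right (dvd_pow_self n (hmem₁ i hi).1) _
    have hdvdL : n ∣ n ^ (K + 1) * d ^ (N - (K + 1)) :=
      Dvd.dvd.mul_right (dvd_pow_self n (Nat.succ_ne_zero K)) _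
    have hdvdc : n ∣ L.count 0 * d ^ N := by
      have h1 : n ∣ L.count 0 * d ^ N
          + ((L.filter (fun i => ¬ i = 0)).map (fun i => n ^ i * d ^ (N - i))).sum := by
        rw [← hsum, ← heq]; exact hdvdL
      have := Nat.dvd_sub h1 hdvdS
      simpa using this
    obtain ⟨t, htc⟩ := (hcop.pow_right N).dvd_of_dvd_mul_right hdvdc
    have ht1 : 1 ≤ t := by
      rcases Nat.eq_zero_or_pos t with h | h
      · rw [h, Nat.mul_zero] at htc; omega
      · exact h
    refine ih (Multiset.replicate (t * d) 0
        + (L.filter (fun i => ¬ i = 0)).map (fun i => i - 1)) (N - 1) (by omega) ?_ ?_ ?_ ?_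
    · intro j hj
      rw [Multiset.mem_add] at hj
      rcases hj with hj | hj
      · rw [Multiset.eq_of_mem_replicate hj]; omega
      · obtain ⟨i, hi, rfl⟩ := Multiset.mem_map.mp hj
        have := (hmem₁ i hi).2
        omega
    · left
      rw [Multiset.mem_add]
      left
      exact Multiset.mem_replicate.mpr ⟨by positivity, rfl⟩
    · rw [Multiset.card_add, Multiset.card_replicate]
      have h2td : 2 ≤ t * d := le_trans hd (Nat.le_mul_of_pos_left d ht1)
      omega
    · apply Nat.eq_of_mul_eq_mul_left (show 0 < n by omega)
      have e1 : n * (n ^ K * d ^ (N - 1 - K)) = n ^ (K + 1) * d ^ (N - (K + 1)) := by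
        have h : N - 1 - K = N - (K + 1) := by omega
        rw [h, pow_succ]; ring
      rw [e1, heq, hsum, ← Multiset.sum_map_mul_left, Multiset.map_add, Multiset.sum_add,
        Multiset.map_replicate, Multiset.sum_replicate, Multiset.map_map]
      congr 1
      · -- (t*d) • (n * (n^0 * d^(N-1-0))) = count * d^N
        simp only [pow_zero, one_mul, Nat.sub_zero, smul_eq_mul, htc]
        have h : d * d ^ (N - 1) = d ^ N := by
          rw [← pow_succ']
          congr 1
          omega
        calc n * t * d ^ N = n * t * (d * d ^ (N - 1)) := by rw [h]
          _ = t * d * (n * d ^ (N - 1)) := by ring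
      · rw [Multiset.map_congr rfl]
        intro i hi
        obtain ⟨j, rfl⟩ := Nat.exists_eq_succ_of_ne_zero (hmem₁ i hi).1
        have hiN := (hmem₁ _ hi).2
        simp only [Function.comp_apply, Nat.succ_sub_one]
        have h : N - 1 - j = N - (j + 1) := by omega
        rw [h, pow_succ]
        ring

lemma exists_min (l : Multiset ℤ) (k : ℤ) :
    ∃ m : ℤ, m ≤ k ∧ (∀ i ∈ l, m ≤ i) ∧ (m = k ∨ m ∈ l) := by
  induction l using Multiset.induction with
  | empty => exact ⟨k, le_refl k, by simp, Or.inl rfl⟩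
  | @cons a s ih =>
    obtain ⟨m, h1, h2, h3⟩ := ih
    rcases le_total a m with h | h
    · refine ⟨a, le_trans h h1, ?_, Or.inr (Multiset.mem_cons_self a s)⟩
      intro i hi
      rcases Multiset.mem_cons.mp hi with rfl | hi
      · exact le_rfl
      · exact le_trans h (h2 i hi)
    · refine ⟨m, h1, ?_, ?_⟩
      · intro i hi
        rcases Multiset.mem_cons.mp hi with rfl | hi
        · exact h
        · exact h2 i hi
      · rcases h3 with h3 | h3
        · exact Or.inl h3
        · exact Or.inr (Multiset.mem_cons_of_mem h3)

lemma keyRat (r : ℚ) (hr : 0 < r) (hn : 1 < r.num) (hd : 1 < r.den)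
    (l : Multiset ℤ) (k : ℤ) (hcard : 2 ≤ Multiset.card l)
    (hsum : (l.map (fun i => r ^ i)).sum = r ^ k) : False := by
  have hr0 : r ≠ 0 := ne_of_gt hr
  set n : ℕ := r.num.natAbs with hnn
  set d : ℕ := r.den with hdd
  have hn2 : 2 ≤ n := by rw [hnn]; omega
  have hd2 : 2 ≤ d := hd
  have hcop : Nat.Coprime n d := r.reduced
  have hd0 : (d : ℚ) ≠ 0 := Nat.cast_ne_zero.mpr (by omega)
  have hreq : r = (n : ℚ) / (d : ℚ) := by
    have h1 : ((n : ℤ) : ℚ) = (r.num : ℚ) := by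
      rw [hnn, Int.natAbs_of_nonneg (by omega)]
    rw [hdd]
    push_cast at h1
    rw [h1]
    exact (Rat.num_div_den r).symm
  obtain ⟨m, hmk, hml, hmem⟩ := exists_min l k
  set g : ℤ → ℕ := fun i => (i - m).toNat with hg
  set L : Multiset ℕ := l.map g with hL
  set K : ℕ := g k with hK
  set N : ℕ := K + L.sum with hN
  have hmemle : ∀ j ∈ L, j ≤ N := by
    intro j hj
    obtain ⟨L₂, hL₂⟩ := Multiset.exists_cons_of_mem hj
    have : L.sum = j + L₂.sum := by rw [hL₂, Multiset.sum_cons]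
    omega
  have hKN : K ≤ N := Nat.le_add_right _ _
  have hpt : ∀ i : ℤ, m ≤ i → g i ≤ N →
      r ^ i * (r ^ (-m) * (d : ℚ) ^ N) = ((n ^ (g i) * d ^ (N - g i) : ℕ) : ℚ) := by
    intro i him hgi
    have h1 : r ^ i * r ^ (-m) = r ^ ((g i : ℤ)) := by
      rw [← zpow_add₀ hr0]
      congr 1
      rw [hg]
      simp only [Int.toNat_of_nonneg (by omega : (0:ℤ) ≤ i - m)]
      omega
    rw [← mul_assoc, h1, zpow_natCast]
    have hsplit : ((d:ℚ)) ^ N = (d:ℚ) ^ (g i) * (d:ℚ) ^ (N - g i) := by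
      rw [← pow_add]
      congr 1
      omega
    rw [hsplit, hreq, div_pow]
    push_cast
    field_simp
  have heq2 : (l.map (fun i => r ^ i * (r ^ (-m) * (d:ℚ)^N))).sum
      = r ^ k * (r ^ (-m) * (d:ℚ)^N) := by
    rw [Multiset.sum_map_mul_right, hsum]
  have heq3 : (l.map (fun i => ((n ^ g i * d ^ (N - g i) : ℕ) : ℚ))).sum
      = ((n ^ K * d ^ (N - K) : ℕ) : ℚ) := by
    rw [← hpt k hmk hKN, ← heq2]
    congr 1
    apply Multiset.map_congr rfl
    intro i hi
    exact (hpt i (hml i hi) (hmemle (g i) (hL ▸ Multiset.mem_map_of_mem g hi))).symm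
  have heq4 : ((L.map (fun j => n ^ j * d ^ (N - j))).sum : ℚ)
      = ((n ^ K * d ^ (N - K) : ℕ) : ℚ) := by
    rw [Nat.cast_multiset_sum, hL, Multiset.map_map, Multiset.map_map, ← heq3]
    apply congrArg
    apply Multiset.map_congr rfl
    intro i _
    simp [Function.comp]
  have heqN : n ^ K * d ^ (N - K) = (L.map (fun j => n ^ j * d ^ (N - j))).sum :=
    Nat.cast_injective heq4.symm
  refine keyNat hn2 hd2 hcop K L N hKN hmemle ?_ ?_ heqN
  · rcases hmem with h | h
    · right
      rw [hK, hg]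
      simp [h]
    · left
      rw [hL]
      refine Multiset.mem_map.mpr ⟨m, h, ?_⟩
      rw [hg]
      simp
  · rw [hL, Multiset.card_map]
    exact hcard


lemma exists_exp (r : ℚ) : ∀ (l : Multiset ℚ), (∀ y ∈ l, ∃ i : ℤ, y = r ^ i) →
    ∃ e : Multiset ℤ, e.map (fun i => r ^ i) = l := by
  intro l
  induction l using Multiset.induction with
  | empty => exact fun _ => ⟨0, rfl⟩
  | @cons a s ih =>
    intro h
    obtain ⟨i, hi⟩ := h a (Multiset.mem_cons_self a s)
    obtain ⟨e, he⟩ := ih (fun y hy => h y (Multiset.mem_cons_of_mem hy))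
    exact ⟨i ::ₘ e, by rw [Multiset.map_cons, he, hi]⟩


/-- `a` is an atom of the reduced additive monoid `M ⊆ ℚ≥0`. -/
def IsAtomOf (M : AddSubmonoid ℚ) (a : ℚ) : Prop :=
  a ∈ M ∧ a ≠ 0 ∧ ∀ u v : ℚ, u ∈ M → v ∈ M → a = u + v → u = 0 ∨ v = 0

/-- `M` is atomic: every element is a finite sum of atoms. -/
def IsAtomicMonoid (M : AddSubmonoid ℚ) : Prop :=
  ∀ x ∈ M, ∃ l : Multiset ℚ, (∀ a ∈ l, IsAtomOf M a) ∧ l.sum = x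

/-- For `r = n/d` with `n, d > 1`, the additive submonoid of `ℚ≥0` generated by
all integer powers of `r` has exactly `{rⁿ | n ∈ ℤ}` as its set of atoms, and
in particular it is atomic. -/
theorem stmt2 (r : ℚ) (hr : 0 < r) (hn : 1 < r.num) (hd : 1 < r.den)
    (M : AddSubmonoid ℚ) (hM : M = AddSubmonoid.closure {q : ℚ | ∃ n : ℤ, q = r ^ n}) :
    {a : ℚ | IsAtomOf M a} = {q : ℚ | ∃ n : ℤ, q = r ^ n} ∧ IsAtomicMonoid M := by
  subst hM
  have hr0 : r ≠ 0 := ne_of_gt hr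
  set S := {q : ℚ | ∃ n : ℤ, q = r ^ n} with hS
  have hS_atom : ∀ q ∈ S, IsAtomOf (AddSubmonoid.closure S) q := by
    rintro q ⟨i, rfl⟩
    refine ⟨AddSubmonoid.subset_closure ⟨i, rfl⟩, zpow_ne_zero i hr0, ?_⟩
    intro u v hu hv huv
    by_contra hcon
    push_neg at hcon
    obtain ⟨hu0, hv0⟩ := hcon
    obtain ⟨lu, hlu, hlusum⟩ := AddSubmonoid.exists_multiset_of_mem_closure hu
    obtain ⟨lv, hlv, hlvsum⟩ := AddSubmonoid.exists_multiset_of_mem_closure hv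
    obtain ⟨eu, heu⟩ := exists_exp r lu hlu
    obtain ⟨ev, hev⟩ := exists_exp r lv hlv
    have heu0 : eu ≠ 0 := by
      intro h
      rw [h] at heu
      apply hu0
      rw [← hlusum, ← heu]
      simp
    have hev0 : ev ≠ 0 := by
      intro h
      rw [h] at hev
      apply hv0
      rw [← hlvsum, ← hev]
      simp
    refine keyRat r hr hn hd (eu + ev) i ?_ ?_
    · rw [Multiset.card_add]
      have h1 : 0 < Multiset.card eu := Multiset.card_pos.mpr heu0
      have h2 : 0 < Multiset.card ev := Multiset.card_pos.mpr hev0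
      omega
    · rw [Multiset.map_add, Multiset.sum_add, heu, hev, hlusum, hlvsum]
      exact huv.symm
  constructor
  · ext a
    simp only [Set.mem_setOf_eq]
    constructor
    · rintro ⟨haM, ha0, hatom⟩
      obtain ⟨lu, hlu, rfl⟩ := AddSubmonoid.exists_multiset_of_mem_closure haM
      have hne : lu ≠ 0 := by
        intro h
        rw [h] at ha0
        simp at ha0
      obtain ⟨q, hq⟩ := Multiset.exists_mem_of_ne_zero hne
      obtain ⟨lu₂, rfl⟩ := Multiset.exists_cons_of_mem hq
      obtain ⟨i, rfl⟩ := hlu q (Multiset.mem_cons_self q lu₂)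
      have h2 : lu₂.sum ∈ AddSubmonoid.closure S :=
        AddSubmonoid.multiset_sum_mem _ _
          (fun x hx => AddSubmonoid.subset_closure (hlu x (Multiset.mem_cons_of_mem hx)))
      rcases hatom (r ^ i) lu₂.sum (AddSubmonoid.subset_closure ⟨i, rfl⟩) h2
          (by rw [Multiset.sum_cons]) with h | h
      · exact absurd h (zpow_ne_zero i hr0)
      · rw [Multiset.sum_cons, h, add_zero]
        exact ⟨i, rfl⟩
    · intro hq
      exact hS_atom a hq
  · intro x hx
    obtain ⟨l, hl, hsum⟩ := AddSubmonoid.exists_multiset_of_mem_closure hx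
    exact ⟨l, fun a ha => hS_atom a (hl a ha), hsum⟩
end

section
/- Let r ∈ ℚ with r > 0 whose numerator and denominator (in lowest terms) are both greater than 1, and let M = ⟨rⁿ | n ∈ ℤ⟩ ⊆ ℚ≥0. Then the group of monoid automorphisms of M is isomorphic to ℤ; explicitly, the automorphisms of M are exactly the maps x ↦ rⁿ·x for n ∈ ℤ. -/
lemma padicValRat_zpow (p : ℕ) [Fact p.Prime] {q : ℚ} (hq : q ≠ 0) (n : ℤ) :
    padicValRat p (q ^ n) = n * padicValRat p q := by
  rcases n with k | k
  · rw [Int.ofNat_eq_coe, zpow_natCast, padicValRat.pow q]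
  · rw [zpow_negSucc, padicValRat.inv, padicValRat.pow q, Int.negSucc_eq]
    push_cast
    ring

lemma val_r (r : ℚ) (hd : 1 < r.den) :
    padicValRat r.den.minFac r = -(padicValNat r.den.minFac r.den : ℤ) ∧
    1 ≤ padicValNat r.den.minFac r.den := by
  have hp : r.den.minFac.Prime := Nat.minFac_prime (by omega)
  haveI : Fact r.den.minFac.Prime := ⟨hp⟩
  have hdvd : r.den.minFac ∣ r.den := Nat.minFac_dvd _
  have hnotdvd : ¬ ((r.den.minFac : ℤ) ∣ r.num) := by
    intro h
    have h1 : r.den.minFac ∣ r.num.natAbs := Int.natCast_dvd_natCast.mp (Int.dvd_natAbs.mpr h)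
    have h2 : r.den.minFac ∣ 1 := r.reduced ▸ Nat.dvd_gcd h1 hdvd
    exact hp.one_lt.ne' (Nat.dvd_one.mp h2)
  constructor
  · rw [padicValRat_def, padicValInt.eq_zero_of_not_dvd hnotdvd]
    simp
  · exact one_le_padicValNat_of_dvd r.den_ne_zero hdvd

section
variable {r : ℚ}

lemma mem_nonneg (hr : 0 < r) {x : ℚ}
    (hx : x ∈ AddSubmonoid.closure {q : ℚ | ∃ n : ℤ, q = r ^ n}) : 0 ≤ x := by
  refine AddSubmonoid.closure_induction ?_ le_rfl ?_ hx
  · rintro x ⟨n, rfl⟩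
    positivity
  · intro x y _ _ hx hy
    linarith

lemma bound (hr1 : 1 < r) (hd : 1 < r.den) {x : ℚ}
    (hx : x ∈ AddSubmonoid.closure {q : ℚ | ∃ n : ℤ, q = r ^ n}) :
    x = 0 ∨ ∃ b : ℤ, r ^ b ≤ x ∧
      -(b * (padicValNat r.den.minFac r.den : ℤ)) ≤ padicValRat r.den.minFac x := by
  have hp : r.den.minFac.Prime := Nat.minFac_prime (by omega)
  haveI : Fact r.den.minFac.Prime := ⟨hp⟩
  have hr0 : (0:ℚ) < r := lt_trans one_pos hr1
  obtain ⟨hvr, hw⟩ := val_r r hd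
  set ℓ := r.den.minFac with hℓ
  set w : ℤ := (padicValNat ℓ r.den : ℤ) with hwdef
  have hw0 : (0:ℤ) ≤ w := by positivity
  refine AddSubmonoid.closure_induction ?_ (Or.inl rfl) ?_ hx
  · rintro x ⟨n, rfl⟩
    refine Or.inr ⟨n, le_rfl, ?_⟩
    rw [padicValRat_zpow _ (ne_of_gt hr0), hvr]
    ring_nf
    exact le_rfl
  · intro x y hxm hym hx hy
    rcases hx with rfl | ⟨bx, hbx1, hbx2⟩
    · simpa using hy
    rcases hy with rfl | ⟨c, hc1, hc2⟩
    · exact Or.inr ⟨bx, by simpa using hbx1, by simpa using hbx2⟩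
    right
    have hxpos : (0:ℚ) < x := lt_of_lt_of_le (zpow_pos hr0 _) hbx1
    have hypos : (0:ℚ) < y := lt_of_lt_of_le (zpow_pos hr0 _) hc1
    refine ⟨max bx c, ?_, ?_⟩
    · rcases le_total bx c with h | h
      · rw [max_eq_right h]; linarith
      · rw [max_eq_left h]; linarith
    · have hne : x + y ≠ 0 := by positivity
      have hmin := padicValRat.min_le_padicValRat_add (p := ℓ) hne
      have h1 : -((max bx c) * w) ≤ padicValRat ℓ x :=
        le_trans (by nlinarith [le_max_left bx c]) hbx2
      have h2 : -((max bx c) * w) ≤ padicValRat ℓ y :=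
        le_trans (by nlinarith [le_max_right bx c]) hc2
      exact le_trans (le_min h1 h2) hmin

lemma key (hr1 : 1 < r) (hd : 1 < r.den) {q q' : ℚ}
    (hq : q ∈ AddSubmonoid.closure {x : ℚ | ∃ n : ℤ, x = r ^ n})
    (hq' : q' ∈ AddSubmonoid.closure {x : ℚ | ∃ n : ℤ, x = r ^ n})
    (h : q * q' = 1) : ∃ n : ℤ, q = r ^ n := by
  have hp : r.den.minFac.Prime := Nat.minFac_prime (by omega)
  haveI : Fact r.den.minFac.Prime := ⟨hp⟩
  have hr0 : (0:ℚ) < r := lt_trans one_pos hr1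
  obtain ⟨hvr, hw⟩ := val_r r hd
  have hq0 : q ≠ 0 := fun h0 => by simp [h0] at h
  have hq'0 : q' ≠ 0 := fun h0 => by simp [h0] at h
  rcases bound hr1 hd hq with rfl | ⟨b, hb1, hb2⟩
  · exact absurd rfl hq0
  rcases bound hr1 hd hq' with rfl | ⟨c, hc1, hc2⟩
  · exact absurd rfl hq'0
  set ℓ := r.den.minFac with hℓ
  set w : ℤ := (padicValNat ℓ r.den : ℤ) with hwdef
  have hval : padicValRat ℓ q + padicValRat ℓ q' = 0 := by
    rw [← padicValRat.mul hq0 hq'0, h, padicValRat.one]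
  have hw' : (1:ℤ) ≤ w := by rw [hwdef]; exact_mod_cast hw
  have hsum : 0 ≤ (b + c) * w := by nlinarith
  have hbc0 : 0 ≤ b + c := by
    by_contra hneg
    push_neg at hneg
    have : (b + c) * w ≤ (-1) * w := mul_le_mul_of_nonneg_right (by omega) (by omega)
    omega
  have hqpos : (0:ℚ) < q := lt_of_lt_of_le (zpow_pos hr0 _) hb1
  have hq'pos : (0:ℚ) < q' := lt_of_lt_of_le (zpow_pos hr0 _) hc1
  have hprod : r ^ (b + c) ≤ 1 := by
    calc r ^ (b+c) = r ^ b * r ^ c := zpow_add₀ (ne_of_gt hr0) b c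
    _ ≤ q * q' := by
        apply mul_le_mul hb1 hc1 (le_of_lt (zpow_pos hr0 _)) (le_of_lt hqpos)
    _ = 1 := h
  have hbc : b + c = 0 := by
    by_contra hne
    have hlt : 0 < b + c := lt_of_le_of_ne hbc0 (Ne.symm hne)
    have : (1:ℚ) < r ^ (b + c) := one_lt_zpow₀ hr1 hlt
    linarith
  refine ⟨b, ?_⟩
  have hc' : c = -b := by omega
  have : r ^ b * q' ≤ 1 := by
    calc r ^ b * q' ≤ q * q' := by
          apply mul_le_mul_of_nonneg_right hb1 (le_of_lt hq'pos)
    _ = 1 := h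
  have h2 : (1:ℚ) ≤ r ^ b * q' := by
    calc (1:ℚ) = r ^ b * r ^ c := by
          rw [← zpow_add₀ (ne_of_gt hr0), hbc, zpow_zero]
    _ ≤ r ^ b * q' := by
          apply mul_le_mul_of_nonneg_left hc1 (le_of_lt (zpow_pos hr0 _))
  have : r ^ b * q' = 1 := le_antisymm this h2
  have := this.trans h.symm
  exact (mul_right_cancel₀ hq'0 this).symm

lemma hom_eq (hr : 0 < r) {M : AddSubmonoid ℚ}
    (hM : M = AddSubmonoid.closure {q : ℚ | ∃ n : ℤ, q = r ^ n})
    (h1 : (1:ℚ) ∈ M) (ψ : ↥M →+ ↥M) (x : ↥M) :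
    (ψ x : ℚ) = (ψ ⟨1, h1⟩ : ℚ) * (x : ℚ) := by
  have hxmem : (x:ℚ) ∈ AddSubmonoid.closure {q : ℚ | ∃ n : ℤ, q = r ^ n} := by
    rw [← hM]; exact x.2
  have hx0 : 0 ≤ (x:ℚ) := mem_nonneg hr hxmem
  have hk0 : (0:ℚ) < ((x:ℚ).den : ℚ) := by exact_mod_cast (x:ℚ).pos
  have hcast : (((x:ℚ).num.toNat : ℕ) : ℚ) = ((x:ℚ).num : ℚ) := by
    exact_mod_cast Int.toNat_of_nonneg (Rat.num_nonneg.mpr hx0)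
  have hxk : (x:ℚ) * (x:ℚ).den = (((x:ℚ).num.toNat : ℕ) : ℚ) := by
    rw [hcast, Rat.mul_den_eq_num]
  have hkey : (x:ℚ).den • x = (x:ℚ).num.toNat • (⟨1, h1⟩ : ↥M) := by
    apply Subtype.ext
    push_cast [nsmul_eq_mul]
    linarith
  have hψ := congrArg ψ hkey
  rw [map_nsmul, map_nsmul] at hψ
  have hcoe : ((x:ℚ).den : ℚ) * (ψ x : ℚ) = (((x:ℚ).num.toNat : ℕ) : ℚ) * (ψ ⟨1, h1⟩ : ℚ) := by
    have := congrArg (Subtype.val) hψ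
    push_cast [nsmul_eq_mul] at this
    linarith
  apply mul_left_cancel₀ (ne_of_gt hk0)
  calc ((x:ℚ).den : ℚ) * (ψ x : ℚ) = (((x:ℚ).num.toNat : ℕ) : ℚ) * (ψ ⟨1, h1⟩ : ℚ) := hcoe
  _ = ((x:ℚ).den : ℚ) * ((ψ ⟨1, h1⟩ : ℚ) * (x : ℚ)) := by rw [← hxk]; ring

lemma key' (r : ℚ) (hr : 0 < r) (hn : 1 < r.num) (hd : 1 < r.den) {q q' : ℚ}
    (hq : q ∈ AddSubmonoid.closure {x : ℚ | ∃ n : ℤ, x = r ^ n})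
    (hq' : q' ∈ AddSubmonoid.closure {x : ℚ | ∃ n : ℤ, x = r ^ n})
    (h : q * q' = 1) : ∃ n : ℤ, q = r ^ n := by
  rcases lt_trichotomy r 1 with hlt | heq | hgt
  · have hr1 : 1 < r⁻¹ := (one_lt_inv₀ hr).mpr hlt
    have hrnum : (0:ℤ) < r.num := by omega
    have hinv : r⁻¹ = ((r.den : ℤ) : ℚ) / ((r.num : ℤ) : ℚ) := by
      rw [inv_eq_one_div]
      conv_lhs => rw [← Rat.num_div_den r]
      rw [one_div_div]
      norm_num
    have hden : (((r⁻¹).den : ℤ)) = r.num := by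
      rw [hinv]
      exact Rat.den_div_eq_of_coprime hrnum (by simpa using r.reduced.symm)
    have hden1 : 1 < (r⁻¹).den := by omega
    have hset : {x : ℚ | ∃ n : ℤ, x = r ^ n} = {x : ℚ | ∃ n : ℤ, x = r⁻¹ ^ n} := by
      ext x
      constructor <;> rintro ⟨n, rfl⟩ <;> exact ⟨-n, by simp [zpow_neg, inv_zpow]⟩
    rw [hset] at hq hq'
    obtain ⟨n, hqn⟩ := key hr1 hden1 hq hq' h
    exact ⟨-n, by rw [hqn, inv_zpow, zpow_neg]⟩
  · rw [heq] at hn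
    norm_num at hn
  · exact key hgt hd hq hq' h


/-- For `r = n/d` with `n, d > 1` and `M = ⟨rⁿ | n ∈ ℤ⟩ ⊆ ℚ≥0`, the automorphism
group of `M` is isomorphic to `ℤ`; explicitly, the automorphisms of `M` are
exactly the maps given by multiplication by integer powers of `r`. -/
theorem stmt3 (r : ℚ) (hr : 0 < r) (hn : 1 < r.num) (hd : 1 < r.den)
    (M : AddSubmonoid ℚ) (hM : M = AddSubmonoid.closure {q : ℚ | ∃ n : ℤ, q = r ^ n}) :
    (∀ φ : ↥M ≃+ ↥M, ∃ n : ℤ, ∀ x : ↥M, ((φ x : ℚ)) = r ^ n * (x : ℚ)) ∧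
    (∀ n : ℤ, ∃ φ : ↥M ≃+ ↥M, ∀ x : ↥M, ((φ x : ℚ)) = r ^ n * (x : ℚ)) ∧
    Nonempty (Multiplicative (AddAut ↥M) ≃* Multiplicative ℤ) := by
  have hr0 : r ≠ 0 := ne_of_gt hr
  have hr1 : r ≠ 1 := by
    intro h
    rw [h] at hn
    norm_num at hn
  have h1 : (1:ℚ) ∈ M := by
    rw [hM]
    exact AddSubmonoid.subset_closure ⟨0, (zpow_zero r).symm⟩
  have hmem : ∀ (n : ℤ) (x : ℚ), x ∈ M → r ^ n * x ∈ M := by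
    intro n x hx
    rw [hM] at hx ⊢
    refine AddSubmonoid.closure_induction ?_ ?_ ?_ hx
    · rintro y ⟨m, rfl⟩
      exact AddSubmonoid.subset_closure ⟨n + m, by rw [zpow_add₀ hr0]⟩
    · rw [mul_zero]; exact zero_mem _
    · intro y z _ _ hy hz
      rw [mul_add]
      exact add_mem hy hz
  -- explicit automorphisms
  let Φ : ℤ → (↥M ≃+ ↥M) := fun n =>
    { toFun := fun x => ⟨r ^ n * x, hmem n x x.2⟩
      invFun := fun x => ⟨r ^ (-n) * x, hmem (-n) x x.2⟩
      left_inv := fun x => by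
        apply Subtype.ext
        show r ^ (-n) * (r ^ n * (x:ℚ)) = x
        rw [← mul_assoc, ← zpow_add₀ hr0, neg_add_cancel, zpow_zero, one_mul]
      right_inv := fun x => by
        apply Subtype.ext
        show r ^ n * (r ^ (-n) * (x:ℚ)) = x
        rw [← mul_assoc, ← zpow_add₀ hr0, add_neg_cancel, zpow_zero, one_mul]
      map_add' := fun x y => by
        apply Subtype.ext
        show r ^ n * ((x:ℚ) + y) = r ^ n * x + r ^ n * y
        ring }
  have hΦcoe : ∀ (n : ℤ) (x : ↥M), ((Φ n x : ℚ)) = r ^ n * (x : ℚ) := fun n x => rfl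
  -- part 1
  have part1 : ∀ φ : ↥M ≃+ ↥M, ∃ n : ℤ, ∀ x : ↥M, ((φ x : ℚ)) = r ^ n * (x : ℚ) := by
    intro φ
    have hφ : ∀ x : ↥M, (φ x : ℚ) = (φ ⟨1, h1⟩ : ℚ) * (x : ℚ) := fun x =>
      hom_eq hr hM h1 φ.toAddMonoidHom x
    have hφ' : ∀ x : ↥M, (φ.symm x : ℚ) = (φ.symm ⟨1, h1⟩ : ℚ) * (x : ℚ) := fun x =>
      hom_eq hr hM h1 φ.symm.toAddMonoidHom x
    set c : ℚ := (φ ⟨1, h1⟩ : ℚ) with hc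
    set c' : ℚ := (φ.symm ⟨1, h1⟩ : ℚ) with hc'
    have hcc' : c * c' = 1 := by
      have := congrArg Subtype.val (φ.apply_symm_apply ⟨1, h1⟩)
      rw [hφ (φ.symm ⟨1, h1⟩)] at this
      simpa [← hc'] using this
    have hcm : c ∈ AddSubmonoid.closure {x : ℚ | ∃ n : ℤ, x = r ^ n} := by
      rw [← hM]; exact (φ ⟨1, h1⟩).2
    have hc'm : c' ∈ AddSubmonoid.closure {x : ℚ | ∃ n : ℤ, x = r ^ n} := by
      rw [← hM]; exact (φ.symm ⟨1, h1⟩).2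
    obtain ⟨m, hm⟩ := key' r hr hn hd hcm hc'm hcc'
    exact ⟨m, fun x => by rw [hφ x, hm]⟩
  refine ⟨part1, fun n => ⟨Φ n, hΦcoe n⟩, ?_⟩
  -- part 3
  have hΦmul : ∀ a b : ℤ, Φ (a + b) = ((Φ a : AddAut ↥M) + Φ b : AddAut ↥M) := by
    intro a b
    apply AddEquiv.ext
    intro x
    apply Subtype.ext
    rw [AddAut.add_apply]
    rw [hΦcoe (a+b) x, hΦcoe a (Φ b x), hΦcoe b x, ← mul_assoc, ← zpow_add₀ hr0]
  let Ψ : Multiplicative ℤ →* Multiplicative (AddAut ↥M) :=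
    MonoidHom.mk' (fun n => Multiplicative.ofAdd (Φ n.toAdd)) (by
      intro a b
      exact congrArg Multiplicative.ofAdd (hΦmul a.toAdd b.toAdd))
  have hinj : Function.Injective Ψ := by
    intro a b hab
    have := congrArg Subtype.val (congrArg (fun (f : Multiplicative (AddAut ↥M)) => f.toAdd ⟨1, h1⟩) hab)
    rw [show ((Ψ a).toAdd ⟨1,h1⟩ : ℚ) = r ^ a.toAdd * 1 from hΦcoe _ _,
        show ((Ψ b).toAdd ⟨1,h1⟩ : ℚ) = r ^ b.toAdd * 1 from hΦcoe _ _] at this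
    have h2 : r ^ a.toAdd = r ^ b.toAdd := by simpa using this
    have := zpow_right_injective₀ hr hr1 h2
    exact Multiplicative.toAdd.injective this
  have hsurj : Function.Surjective Ψ := by
    intro φ
    obtain ⟨n, hn'⟩ := part1 φ.toAdd
    refine ⟨Multiplicative.ofAdd n, ?_⟩
    apply Multiplicative.toAdd.injective
    apply AddEquiv.ext
    intro x
    apply Subtype.ext
    rw [hn' x]
    exact hΦcoe n x
  exact ⟨(MulEquiv.ofBijective Ψ ⟨hinj, hsurj⟩).symm⟩

end
end

section
/- A nontrivial Puiseux monoid M admits a transfer homomorphism to some finitely generated commutative cancellative monoid if and only if M is isomorphic (as a monoid) to a numerical monoid. -/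
/-- Transfer homomorphism of (additive) commutative monoids:
(T1) every element of `N` is `θ a + u` with `u` a unit, and preimages of units
are units; (T2) factorizations lift up to associates. -/
def IsTransferHom {M N : Type*} [AddCommMonoid M] [AddCommMonoid N]
    (θ : M →+ N) : Prop :=
  (∀ b : N, ∃ (a : M) (u : N), IsAddUnit u ∧ b = θ a + u) ∧
  (∀ a : M, IsAddUnit (θ a) → IsAddUnit a) ∧
  (∀ (a : M) (b₁ b₂ : N), θ a = b₁ + b₂ →
    ∃ (a₁ a₂ : M) (u₁ u₂ : N), IsAddUnit u₁ ∧ IsAddUnit u₂ ∧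
      a = a₁ + a₂ ∧ θ a₁ = b₁ + u₁ ∧ θ a₂ = b₂ + u₂)

/-- A transfer homomorphism from `M` to some finitely generated commutative
cancellative monoid. -/
structure FGTransferTarget (M : Type) [AddCommMonoid M] where
  F : Type
  [inst : AddCancelCommMonoid F]
  fg : AddMonoid.FG F
  θ : M →+ F
  transfer : IsTransferHom θ

lemma cofinite_bound {N : AddSubmonoid ℕ} (h : (Set.univ \ (N : Set ℕ)).Finite) :
    ∃ c : ℕ, 0 < c ∧ ∀ n, c ≤ n → n ∈ N := by
  obtain ⟨b, hb⟩ := h.bddAbove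
  refine ⟨b + 1, Nat.succ_pos b, fun n hn => ?_⟩
  by_contra hn'
  exact absurd (hb ⟨Set.mem_univ n, hn'⟩) (by omega)

lemma cofinite_fg {N : AddSubmonoid ℕ} (h : (Set.univ \ (N : Set ℕ)).Finite) :
    AddMonoid.FG ↥N := by
  classical
  obtain ⟨c, hc0, hc⟩ := cofinite_bound h
  rw [AddMonoid.fg_iff_addSubmonoid_fg]
  refine ⟨(Finset.range (2 * c + 1)).filter (· ∈ N), le_antisymm ?_ ?_⟩
  · rw [AddSubmonoid.closure_le]
    intro x hx
    simp only [Finset.coe_filter, Set.mem_setOf_eq] at hx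
    exact hx.2
  · intro n hn
    induction n using Nat.strong_induction_on with
    | _ n ih =>
      by_cases hle : n ≤ 2 * c
      · exact AddSubmonoid.subset_closure (by
          simp only [Finset.coe_filter, Set.mem_setOf_eq, Finset.mem_range]
          exact ⟨by omega, hn⟩)
      · have h1 : c ∈ N := hc c le_rfl
        have h2 : n - c ∈ N := hc _ (by omega)
        have h3 : n = c + (n - c) := by omega
        rw [h3]
        exact add_mem (AddSubmonoid.subset_closure (by
          simp only [Finset.coe_filter, Set.mem_setOf_eq, Finset.mem_range]
          exact ⟨by omega, h1⟩)) (ih (n - c) (by omega) h2)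

lemma id_transfer {M : Type*} [AddCommMonoid M] : IsTransferHom (AddMonoidHom.id M) := by
  refine ⟨fun b => ⟨b, 0, isAddUnit_zero, (add_zero b).symm⟩, fun a h => h, ?_⟩
  intro a b₁ b₂ hab
  exact ⟨b₁, b₂, 0, 0, isAddUnit_zero, isAddUnit_zero, hab, (add_zero b₁).symm, (add_zero b₂).symm⟩

lemma backward_dir (M : AddSubmonoid ℚ) {N : AddSubmonoid ℕ}
    (hN : (Set.univ \ (N : Set ℕ)).Finite) (e : ↥M ≃+ ↥N) :
    Nonempty (FGTransferTarget ↥M) := by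
  have : AddMonoid.FG ↥N := cofinite_fg hN
  have hfg : AddMonoid.FG ↥M :=
    AddMonoid.fg_of_surjective e.symm.toAddMonoidHom e.symm.surjective
  exact ⟨{ F := ↥M, inst := Subtype.coe_injective.addCancelCommMonoid _ rfl (fun _ _ => rfl) (fun _ _ => rfl), fg := hfg, θ := AddMonoidHom.id _, transfer := id_transfer }⟩

lemma mkIso (M : AddSubmonoid ℚ) (N : AddSubmonoid ℕ) (c : ℚ) (hc : c ≠ 0)
    (h1 : ∀ x ∈ M, ∃ n ∈ N, (n : ℚ) = c * x)
    (h2 : ∀ n ∈ N, ∃ x ∈ M, (n : ℚ) = c * x) :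
    Nonempty (↥M ≃+ ↥N) := by
  have f : ∀ x : ↥M, {n : ↥N // ((n : ℕ) : ℚ) = c * (x : ℚ)} := fun x => by
    have h := h1 x x.2
    exact ⟨⟨h.choose, h.choose_spec.1⟩, h.choose_spec.2⟩
  have g : ∀ n : ↥N, {x : ↥M // ((n : ℕ) : ℚ) = c * (x : ℚ)} := fun n => by
    have h := h2 n n.2
    exact ⟨⟨h.choose, h.choose_spec.1⟩, h.choose_spec.2⟩
  refine ⟨AddEquiv.mk ⟨fun x => (f x).1, fun n => (g n).1, ?_, ?_⟩ ?_⟩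
  · intro x
    have h1' := (f x).2
    have h2' := (g (f x).1).2
    have : c * ((g (f x).1).1 : ℚ) = c * (x : ℚ) := by rw [← h2', h1']
    exact Subtype.ext (mul_left_cancel₀ hc this)
  · intro n
    have h1' := (g n).2
    have h2' := (f (g n).1).2
    have : (((f (g n).1).1 : ℕ) : ℚ) = ((n : ℕ) : ℚ) := by rw [h2', ← h1']
    exact Subtype.ext (Nat.cast_injective this)
  · intro x y
    have hx := (f x).2
    have hy := (f y).2
    have hxy := (f (x + y)).2
    apply Subtype.ext
    apply @Nat.cast_injective ℚ _ _
    have hsum : c * ((x + y : ↥M) : ℚ) = c * (x : ℚ) + c * (y : ℚ) := by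
      rw [AddSubmonoid.coe_add]; ring
    rw [AddSubmonoid.coe_add, Nat.cast_add, hxy, hx, hy, hsum]

lemma exists_cofinite (S : AddSubmonoid ℕ) (hS : ∃ s ∈ S, s ≠ 0) :
    ∃ (g : ℕ) (N : AddSubmonoid ℕ), 0 < g ∧ (Set.univ \ (N : Set ℕ)).Finite ∧
      (∀ s ∈ S, ∃ n ∈ N, s = g * n) ∧ (∀ n ∈ N, g * n ∈ S) := by
  obtain ⟨s₀, hs₀, hs₀0⟩ := hS
  set H := AddSubgroup.closure ((fun n : ℕ => (n : ℤ)) '' (S : Set ℕ)) with hH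
  obtain ⟨a, ha⟩ := Int.subgroup_cyclic H
  set g := a.natAbs with hg
  have hdvd : ∀ s ∈ S, g ∣ s := by
    intro s hs
    have hsH : (s : ℤ) ∈ H := AddSubgroup.subset_closure ⟨s, hs, rfl⟩
    rw [ha, AddSubgroup.mem_closure_singleton] at hsH
    obtain ⟨n, hn⟩ := hsH
    have : a ∣ (s : ℤ) := ⟨n, by rw [← hn, zsmul_eq_mul]; push_cast; ring⟩
    have : (g : ℤ) ∣ (s : ℤ) := (Int.natAbs_dvd).2 this
    exact_mod_cast this
  have hg0 : 0 < g := by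
    rcases Nat.eq_zero_or_pos g with h | h
    · exact absurd (Nat.eq_zero_of_zero_dvd (h ▸ hdvd s₀ hs₀)) hs₀0
    · exact h
  -- the difference subgroup
  let D : AddSubgroup ℤ :=
    { carrier := {x | ∃ p ∈ S, ∃ q ∈ S, x = (p : ℤ) - (q : ℤ)}
      zero_mem' := ⟨0, S.zero_mem, 0, S.zero_mem, by simp⟩
      add_mem' := by
        rintro x y ⟨p, hp, q, hq, rfl⟩ ⟨p', hp', q', hq', rfl⟩
        exact ⟨p + p', add_mem hp hp', q + q', add_mem hq hq', by push_cast; ring⟩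
      neg_mem' := by
        rintro x ⟨p, hp, q, hq, rfl⟩
        exact ⟨q, hq, p, hp, by ring⟩ }
  have hHD : H ≤ D := by
    rw [hH, AddSubgroup.closure_le]
    rintro x ⟨s, hs, rfl⟩
    exact ⟨s, hs, 0, S.zero_mem, by simp⟩
  have haD : a ∈ D := hHD (ha ▸ AddSubgroup.subset_closure rfl)
  obtain ⟨p, hp, q, hq, hpq⟩ := haD
  -- p - q = a;  |a| = g, so in ℕ either p = q + g or q = p + g
  have hcase : (∃ p' ∈ S, ∃ q' ∈ S, p' = q' + g) := by
    rcases Int.natAbs_eq a with h | h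
    · exact ⟨p, hp, q, hq, by omega⟩
    · exact ⟨q, hq, p, hp, by omega⟩
  obtain ⟨p', hp', q', hq', hpq'⟩ := hcase
  let N : AddSubmonoid ℕ :=
    { carrier := {n | g * n ∈ S}
      zero_mem' := by simpa using S.zero_mem
      add_mem' := by
        intro m n hm hn
        simpa [mul_add] using add_mem hm hn }
  have hmemN : ∀ n, n ∈ N ↔ g * n ∈ S := fun n => Iff.rfl
  obtain ⟨y, hy⟩ := hdvd q' hq'
  have hyN : y ∈ N := by rw [hmemN, ← hy]; exact hq'
  have hy1N : y + 1 ∈ N := by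
    rw [hmemN]
    have : g * (y + 1) = p' := by rw [mul_add, mul_one, ← hy]; omega
    rw [this]; exact hp'
  have hbig : ∀ n, y * y ≤ n → n ∈ N := by
    intro n hn
    rcases Nat.eq_zero_or_pos y with hy0 | hy0
    · have h1 : (1 : ℕ) ∈ N := by simpa [hy0] using hy1N
      have := AddSubmonoid.nsmul_mem N h1 n
      simpa using this
    · have hdm := Nat.div_add_mod n y
      have hr : n % y < y := Nat.mod_lt _ hy0
      have hq : y ≤ n / y := (Nat.le_div_iff_mul_le hy0).2 (by omega)
      obtain ⟨t, ht⟩ := Nat.exists_eq_add_of_le (le_of_lt (lt_of_lt_of_le hr hq))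
      have hmem := add_mem (AddSubmonoid.nsmul_mem N hyN t)
        (AddSubmonoid.nsmul_mem N hy1N (n % y))
      have heq : t • y + (n % y) • (y + 1) = n := by
        simp only [smul_eq_mul]
        have h2 : t * y + n % y * (y + 1) = y * (n % y + t) + n % y := by ring
        rw [h2, ← ht, hdm]
      rwa [heq] at hmem
  refine ⟨g, N, hg0, ?_, ?_, ?_⟩
  · apply Set.Finite.subset (Set.finite_Iio (y * y))
    rintro n ⟨-, hn⟩
    simp only [Set.mem_Iio]
    by_contra h
    exact hn (hbig n (by omega))
  · intro s hs
    obtain ⟨n, hn⟩ := hdvd s hs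
    exact ⟨n, by rw [hmemN, ← hn]; exact hs, hn⟩
  · intro n hn
    exact hn


lemma addUnit_left {F : Type*} [AddCommMonoid F] {x y : F} (h : IsAddUnit (x + y)) :
    IsAddUnit x := by
  obtain ⟨u, hu⟩ := h
  refine IsAddUnit.of_add_eq_zero (y + ↑(-u)) ?_
  rw [← add_assoc, ← hu, AddUnits.add_neg]

lemma card_le_sum' {s : Multiset ℕ} (h : ∀ a ∈ s, 1 ≤ a) : Multiset.card s ≤ s.sum := by
  induction s using Multiset.induction_on with
  | empty => simp
  | cons a s ih =>
    simp only [Multiset.card_cons, Multiset.sum_cons]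
    have h1 := h a (Multiset.mem_cons_self a s)
    have h2 := ih (fun b hb => h b (Multiset.mem_cons_of_mem hb))
    omega

section Fside

variable {F : Type} [AddCancelCommMonoid F] (S : Finset F)

noncomputable def piH : ((↥S → ℕ)) →+ F where
  toFun v := ∑ i : ↥S, v i • (i : F)
  map_zero' := by simp
  map_add' v w := by
    simp only [Pi.add_apply, add_nsmul]
    rw [Finset.sum_add_distrib]

open Classical in
noncomputable def nuH : ((↥S → ℕ)) →+ ℕ where
  toFun v := ∑ i : ↥S, if IsAddUnit (i : F) then 0 else v i
  map_zero' := by simp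
  map_add' v w := by
    rw [← Finset.sum_add_distrib]
    apply Finset.sum_congr rfl
    intro i _
    by_cases h : IsAddUnit (i : F) <;> simp [h]

lemma piH_apply (v : ↥S → ℕ) : piH S v = ∑ i : ↥S, v i • (i : F) := rfl

open Classical in
lemma nuH_apply (v : ↥S → ℕ) : nuH S v = ∑ i : ↥S, if IsAddUnit (i : F) then 0 else v i := rfl

lemma piH_surj (hS : AddSubmonoid.closure (↑S : Set F) = ⊤) (y : F) :
    ∃ v, piH S v = y := by
  classical
  have hy : y ∈ AddSubmonoid.closure (↑S : Set F) := hS ▸ AddSubmonoid.mem_top y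
  refine AddSubmonoid.closure_induction (fun x hx => ?_) ⟨0, map_zero _⟩
    (fun x y _ _ ⟨v, hv⟩ ⟨w, hw⟩ => ⟨v + w, by rw [map_add, hv, hw]⟩) hy
  refine ⟨fun j => if j = ⟨x, hx⟩ then 1 else 0, ?_⟩
  rw [piH_apply]
  have hj : ∀ j : ↥S, (if j = (⟨x, hx⟩ : ↥S) then (1:ℕ) else 0) • (j : F) =
      if j = (⟨x, hx⟩ : ↥S) then (j : F) else 0 := by
    intro j; by_cases h : j = (⟨x, hx⟩ : ↥S) <;> simp [h]
  rw [Finset.sum_congr rfl (fun j _ => hj j), Finset.sum_ite_eq' Finset.univ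
    (⟨x, hx⟩ : ↥S) (fun j : ↥S => (j : F))]
  simp

lemma piH_eq_zero {v : ↥S → ℕ} (h : piH S v = 0) :
    ∀ i : ↥S, ¬IsAddUnit (i : F) → v i = 0 := by
  classical
  intro i hi
  by_contra hvi
  have hsum : v i • (i : F) + ∑ j ∈ Finset.univ.erase i, v j • (j : F) = 0 := by
    rw [Finset.add_sum_erase Finset.univ (fun j : ↥S => v j • (j : F)) (Finset.mem_univ i)]
    exact h
  have hunit : IsAddUnit (v i • (i : F)) := IsAddUnit.of_add_eq_zero _ hsum
  have hvi' : v i = (v i - 1) + 1 := by omega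
  rw [hvi', succ_nsmul'] at hunit
  exact hi (addUnit_left hunit)

open Classical in
lemma nuH_eq_zero_unit {v : ↥S → ℕ} (h : nuH S v = 0) : IsAddUnit (piH S v) := by
  rw [piH_apply]
  refine Finset.sum_induction _ IsAddUnit (fun a b ha hb => ha.add hb) isAddUnit_zero ?_
  intro i _
  by_cases hi : IsAddUnit (i : F)
  · exact hi.nsmul _
  · have hv : v i = 0 := by
      have := (Finset.sum_eq_zero_iff.mp (h ▸ (nuH_apply S v).symm)) i (Finset.mem_univ i)
      simpa [hi] using this
    simp [hv]

open Classical in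
lemma nuH_pos {v : ↥S → ℕ} (h : nuH S v ≠ 0) :
    ∃ i : ↥S, ¬IsAddUnit (i : F) ∧ 1 ≤ v i := by
  by_contra hc
  push_neg at hc
  apply h
  rw [nuH_apply]
  apply Finset.sum_eq_zero
  intro i _
  by_cases hi : IsAddUnit (i : F)
  · simp [hi]
  · have := hc i hi
    simp [hi]; omega

lemma piH_decomp {v : ↥S → ℕ} {i : ↥S} (hi : 1 ≤ v i) :
    ∃ r : F, piH S v = (i : F) + r := by
  classical
  obtain ⟨c, hc⟩ : ∃ c, v i = c + 1 := ⟨v i - 1, by omega⟩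
  refine ⟨c • (i : F) + ∑ j ∈ Finset.univ.erase i, v j • (j : F), ?_⟩
  rw [piH_apply, ← Finset.add_sum_erase Finset.univ (fun j : ↥S => v j • (j : F))
    (Finset.mem_univ i), hc, succ_nsmul', add_assoc]

lemma nuH_fiber_eq {v w : ↥S → ℕ} (hle : v ≤ w) (h : piH S v = piH S w) :
    nuH S v = nuH S w := by
  classical
  have hw : w = v + (w - v) := by
    funext i
    have h3 : v i ≤ w i := hle i
    simp only [Pi.add_apply, Pi.sub_apply]
    omega
  have h0 : piH S (w - v) = 0 := by
    have h2 : piH S v + piH S (w - v) = piH S v + 0 := by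
      rw [add_zero, ← map_add, ← hw, h]
    exact add_left_cancel h2
  have hz := piH_eq_zero S h0
  have hnu0 : nuH S (w - v) = 0 := by
    rw [nuH_apply]
    apply Finset.sum_eq_zero
    intro i _
    by_cases hi : IsAddUnit (i : F)
    · simp [hi]
    · simp [hi, hz i hi]
  rw [hw, map_add, hnu0, add_zero]

lemma nuH_bdd (y : F) : ∃ B, ∀ v, piH S v = y → nuH S v ≤ B := by
  by_contra hB
  push_neg at hB
  choose f hf1 hf2 using hB
  let u : ℕ → (↥S → ℕ) := fun n => Nat.rec (f 0) (fun _ p => f (nuH S p)) n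
  have hu1 : ∀ n, piH S (u n) = y := by
    intro n
    cases n with
    | zero => exact hf1 0
    | succ n => exact hf1 _
  have hu2 : StrictMono (fun n => nuH S (u n)) :=
    strictMono_nat_of_lt_succ (fun n => hf2 _)
  have hpwo : (Set.univ : Set (↥S → ℕ)).IsPWO :=
    Set.isPWO_of_wellQuasiOrderedLE _
  obtain ⟨m, n, hmn, hle⟩ := hpwo (fun n => ⟨u n, Set.mem_univ _⟩)
  have heq := nuH_fiber_eq S hle ((hu1 m).trans (hu1 n).symm)
  exact absurd heq (ne_of_lt (hu2 hmn))

lemma key_smul {i u u' : F} (hu : IsAddUnit u)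
    {m n : ℕ} (hmn : m < n) (h : m • (i + u) = n • (i + u')) : IsAddUnit i := by
  obtain ⟨k, hk⟩ := Nat.exists_eq_add_of_lt hmn
  have hk' : n = m + (k + 1) := by omega
  rw [hk', smul_add, smul_add, add_nsmul, add_nsmul, add_assoc] at h
  have h2 := add_left_cancel h
  have hmu : IsAddUnit (k • i + 1 • i + (m + (k + 1)) • u') := by
    rw [← h2]; exact hu.nsmul m
  have h4 := addUnit_left hmu
  rw [add_comm] at h4
  have h5 := addUnit_left h4
  rwa [one_nsmul] at h5

end Fside


lemma common_den (M : AddSubmonoid ℚ) (hM : IsPuiseux M) (T : FGTransferTarget ↥M) :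
    ∃ d : ℕ, 0 < d ∧ ∀ x ∈ M, ∃ m : ℕ, (m : ℚ) = (d : ℚ) * x := by
  classical
  obtain @⟨F, instF, fg, θ, hT⟩ := T
  obtain ⟨hT1, hT2, hT3⟩ := hT
  obtain ⟨S, hS⟩ := AddMonoid.fg_def.mp fg
  -- units of M are trivial
  have hMunit : ∀ a : ↥M, IsAddUnit a → a = 0 := by
    intro a ha
    obtain ⟨u, hu⟩ := ha
    have h3 : a + ↑(-u) = (0 : ↥M) := by rw [← hu]; exact AddUnits.add_neg u
    have h4 : (a : ℚ) + ((↑(-u) : ↥M) : ℚ) = 0 := by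
      simpa [AddSubmonoid.coe_add] using congrArg (Subtype.val) h3
    have h1 : (0:ℚ) ≤ (a : ℚ) := hM _ a.2
    have h2 : (0:ℚ) ≤ ((↑(-u) : ↥M) : ℚ) := hM _ (↑(-u) : ↥M).2
    have h5 : (a : ℚ) = 0 := by linarith
    exact Subtype.ext (by rw [h5]; simp)
  have hApos : ∀ a : ↥M, a ≠ 0 → 0 < (a : ℚ) := fun a ha =>
    lt_of_le_of_ne (hM _ a.2) (fun h => ha (Subtype.ext h.symm))
  -- lifting elements of θ(M)
  have hlift : ∀ a : ↥M, a ≠ 0 → ∃ v, piH S v = θ a ∧ 1 ≤ nuH S v := by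
    intro a ha
    obtain ⟨v, hv⟩ := piH_surj S hS (θ a)
    refine ⟨v, hv, ?_⟩
    rcases Nat.eq_zero_or_pos (nuH S v) with h0 | h1
    · exact absurd (hMunit a (hT2 a (hv ▸ nuH_eq_zero_unit S h0))) ha
    · exact h1
  -- M is a BF monoid
  have hBF : ∀ x : ↥M, ∃ B : ℕ, ∀ s : Multiset ↥M,
      (∀ a ∈ s, a ≠ 0) → s.sum = x → Multiset.card s ≤ B := by
    intro x
    obtain ⟨B, hB⟩ := nuH_bdd S (θ x)
    refine ⟨B, fun s hs hsum => ?_⟩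
    have hLex : ∀ a : ↥M, ∃ v : ↥S → ℕ, (a ≠ 0 → piH S v = θ a ∧ 1 ≤ nuH S v) := by
      intro a
      by_cases h : a ≠ 0
      · obtain ⟨v, h1, h2⟩ := hlift a h
        exact ⟨v, fun _ => ⟨h1, h2⟩⟩
      · exact ⟨0, fun h' => absurd h' h⟩
    choose L hL using hLex
    have hpi : piH S ((s.map L).sum) = θ x := by
      rw [AddMonoidHom.map_multiset_sum, Multiset.map_map]
      have heq : Multiset.map (⇑(piH S) ∘ L) s = Multiset.map (⇑θ) s :=
        Multiset.map_congr rfl (fun a ha => (hL a (hs a ha)).1)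
      rw [heq, ← AddMonoidHom.map_multiset_sum, hsum]
    have hnu : Multiset.card s ≤ nuH S ((s.map L).sum) := by
      rw [AddMonoidHom.map_multiset_sum, Multiset.map_map]
      have h1 : Multiset.card s = Multiset.card (Multiset.map (⇑(nuH S) ∘ L) s) :=
        (Multiset.card_map _ s).symm
      rw [h1]
      apply card_le_sum'
      intro b hb
      obtain ⟨a, ha, rfl⟩ := Multiset.mem_map.mp hb
      exact (hL a (hs a ha)).2
    exact le_trans hnu (hB _ hpi)
  -- the set of atoms
  set A : Set ↥M := {a | a ≠ 0 ∧ ∀ y z : ↥M, a = y + z → y = 0 ∨ z = 0} with hA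
  have hone : ∀ x : ↥M, x ≠ 0 → 1 ≤ Nat.find (hBF x) := by
    intro x hx
    have := Nat.find_spec (hBF x) {x} (fun a ha => by
      rw [Multiset.mem_singleton] at ha; rw [ha]; exact hx) (Multiset.sum_singleton x)
    simpa using this
  -- atomicity
  have hA_cl : ∀ x : ↥M, x ∈ AddSubmonoid.closure A := by
    have hstep : ∀ n : ℕ, ∀ x : ↥M, Nat.find (hBF x) ≤ n →
        x ∈ AddSubmonoid.closure A := by
      intro n
      induction n with
      | zero =>
        intro x hx
        by_cases hx0 : x = 0
        · rw [hx0]; exact zero_mem _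
        · exact absurd (le_trans (hone x hx0) hx) (by omega)
      | succ n ih =>
        intro x hx
        by_cases hx0 : x = 0
        · rw [hx0]; exact zero_mem _
        by_cases hxA : x ∈ A
        · exact AddSubmonoid.subset_closure hxA
        have hsplit : ∃ y z : ↥M, x = y + z ∧ y ≠ 0 ∧ z ≠ 0 := by
          rw [hA] at hxA
          simp only [Set.mem_setOf_eq, not_and, not_forall] at hxA
          obtain ⟨y, z, hyz, hor⟩ := hxA hx0
          exact ⟨y, z, hyz, by tauto, by tauto⟩
        obtain ⟨y, z, hxyz, hy0, hz0⟩ := hsplit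
        have hkey : ∀ (y' z' : ↥M), x = y' + z' → z' ≠ 0 → Nat.find (hBF y') ≤ n := by
          intro y' z' hx' hz'
          have hle : Nat.find (hBF y') ≤ Nat.find (hBF x) - 1 := by
            apply Nat.find_min'
            intro s hs hsum
            have hsp := Nat.find_spec (hBF x) (z' ::ₘ s) (fun a ha => by
              rcases Multiset.mem_cons.mp ha with h | h
              · rw [h]; exact hz'
              · exact hs a h) (by rw [Multiset.sum_cons, hsum, hx', add_comm])
            simp only [Multiset.card_cons] at hsp
            omega
          have hfx := hone x hx0
          omega
        exact hxyz ▸ AddSubmonoid.add_mem _ (ih y (hkey y z hxyz hz0))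
          (ih z (hkey z y (by rw [hxyz, add_comm]) hy0))
    intro x
    exact hstep (Nat.find (hBF x)) x le_rfl
  -- atoms map to "atoms" of F
  have hatom_im : ∀ a : ↥M, a ∈ A →
      ∃ i : ↥S, ¬IsAddUnit (i : F) ∧ ∃ u : F, IsAddUnit u ∧ θ a = (i : F) + u := by
    rintro a ⟨ha0, hairr⟩
    obtain ⟨v, hv, hnu⟩ := hlift a ha0
    obtain ⟨i, hiu, hvi⟩ := nuH_pos S (show nuH S v ≠ 0 by omega)
    obtain ⟨r, hr⟩ := piH_decomp S hvi
    rw [hv] at hr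
    obtain ⟨a1, a2, u1, u2, hu1, hu2, haa, h1, h2⟩ := hT3 a (i : F) r hr
    rcases hairr a1 a2 haa with h0 | h0
    · exfalso
      rw [h0, map_zero] at h1
      exact hiu (IsAddUnit.of_add_eq_zero _ h1.symm)
    · refine ⟨i, hiu, r, ?_, hr⟩
      rw [h0, map_zero] at h2
      exact IsAddUnit.of_add_eq_zero _ h2.symm
  -- distinct atoms have non-associated images
  have hinj : ∀ a ∈ A, ∀ b ∈ A, ∀ i : ↥S, ¬IsAddUnit (i : F) →
      (∃ u, IsAddUnit u ∧ θ a = (i : F) + u) →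
      (∃ u, IsAddUnit u ∧ θ b = (i : F) + u) → a = b := by
    rintro a ha b hb i hiu ⟨u, hu, hau⟩ ⟨u', hu', hbu⟩
    have ha0 : 0 < (a : ℚ) := hApos a ha.1
    have hb0 : 0 < (b : ℚ) := hApos b hb.1
    have hanum : (0:ℤ) ≤ (a : ℚ).num := le_of_lt (Rat.num_pos.mpr ha0)
    have hbnum : (0:ℤ) ≤ (b : ℚ).num := le_of_lt (Rat.num_pos.mpr hb0)
    have hacast : (((a : ℚ).num.toNat : ℕ) : ℚ) = (((a : ℚ).num : ℤ) : ℚ) := by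
      exact_mod_cast congrArg (Int.cast (R := ℚ)) (Int.toNat_of_nonneg hanum)
    have hbcast : (((b : ℚ).num.toNat : ℕ) : ℚ) = (((b : ℚ).num : ℤ) : ℚ) := by
      exact_mod_cast congrArg (Int.cast (R := ℚ)) (Int.toNat_of_nonneg hbnum)
    set m : ℕ := (b : ℚ).num.toNat * (a : ℚ).den with hmdef
    set n : ℕ := (a : ℚ).num.toNat * (b : ℚ).den with hndef
    have hm : (m : ℚ) * (a : ℚ) = (((a : ℚ).num : ℤ) : ℚ) * (((b : ℚ).num : ℤ) : ℚ) := by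
      rw [hmdef]
      push_cast
      rw [hbcast]
      calc (((b : ℚ).num : ℤ) : ℚ) * ((a : ℚ).den : ℚ) * (a : ℚ)
          = (((b : ℚ).num : ℤ) : ℚ) * ((a : ℚ) * ((a : ℚ).den : ℚ)) := by ring
        _ = _ := by rw [Rat.mul_den_eq_num]; ring
    have hn : (n : ℚ) * (b : ℚ) = (((a : ℚ).num : ℤ) : ℚ) * (((b : ℚ).num : ℤ) : ℚ) := by
      rw [hndef]
      push_cast
      rw [hacast]
      calc (((a : ℚ).num : ℤ) : ℚ) * ((b : ℚ).den : ℚ) * (b : ℚ)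
          = (((a : ℚ).num : ℤ) : ℚ) * ((b : ℚ) * ((b : ℚ).den : ℚ)) := by ring
        _ = _ := by rw [Rat.mul_den_eq_num]
    have hm0 : m ≠ 0 := by
      rw [hmdef]
      have h1 : 0 < (b : ℚ).num.toNat := by
        have := Rat.num_pos.mpr hb0; omega
      have h2 : 0 < (a : ℚ).den := (a : ℚ).den_pos
      exact Nat.mul_ne_zero (by omega) (by omega)
    have hsm : m • a = n • b := by
      apply Subtype.ext
      rw [AddSubmonoidClass.coe_nsmul, AddSubmonoidClass.coe_nsmul, nsmul_eq_mul, nsmul_eq_mul]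
      rw [hm, hn]
    rcases lt_trichotomy m n with h | h | h
    · exfalso
      have hθ : m • (θ a) = n • (θ b) := by
        rw [← map_nsmul, ← map_nsmul, hsm]
      rw [hau, hbu] at hθ
      exact hiu (key_smul hu h hθ)
    · have : (m : ℚ) * (a : ℚ) = (m : ℚ) * (b : ℚ) := by rw [hm, h, hn]
      have := mul_left_cancel₀ (by exact_mod_cast hm0) this
      exact Subtype.ext this
    · exfalso
      have hθ : n • (θ b) = m • (θ a) := by
        rw [← map_nsmul, ← map_nsmul, hsm]
      rw [hau, hbu] at hθ
      exact hiu (key_smul hu' h hθ)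
  -- finiteness of the atom set
  have hAfin : A.Finite := by
    choose idx hidx1 hidx2 using fun a : A => hatom_im a a.2
    have hidxinj : Function.Injective idx := by
      intro a b hab
      exact Subtype.ext (hinj a a.2 b b.2 (idx a) (hidx1 a) (hidx2 a) (hab ▸ hidx2 b))
    haveI : Finite ↥A := Finite.of_injective idx hidxinj
    exact Set.toFinite A
  -- common denominator
  set d : ℕ := ∏ a ∈ hAfin.toFinset, ((a : ℚ)).den with hddef
  have hd0 : 0 < d := Finset.prod_pos (fun a _ => (a : ℚ).den_pos)
  have hmem : ∀ x : ↥M, ∃ m : ℕ, (m : ℚ) = (d : ℚ) * (x : ℚ) := by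
    intro x
    have hx := hA_cl x
    refine AddSubmonoid.closure_induction ?_ ⟨0, by simp⟩ ?_ hx
    · intro a ha
      have hden : ((a : ℚ)).den ∣ d := Finset.dvd_prod_of_mem _ (hAfin.mem_toFinset.mpr ha)
      obtain ⟨e, he⟩ := hden
      have hnum0 : (0:ℤ) ≤ (a : ℚ).num := le_of_lt (Rat.num_pos.mpr (hApos a ha.1))
      refine ⟨e * (a : ℚ).num.toNat, ?_⟩
      have hc : (((a : ℚ).num.toNat : ℕ) : ℚ) = (((a : ℚ).num : ℤ) : ℚ) := by
        exact_mod_cast congrArg (Int.cast (R := ℚ)) (Int.toNat_of_nonneg hnum0)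
      have hd : (d : ℚ) = ((a : ℚ).den : ℚ) * (e : ℚ) := by exact_mod_cast congrArg (Nat.cast (R := ℚ)) he
      push_cast
      rw [hc, hd]
      calc (e : ℚ) * (((a : ℚ).num : ℤ) : ℚ) = (e : ℚ) * ((a : ℚ) * ((a : ℚ).den : ℚ)) := by
            rw [Rat.mul_den_eq_num]
        _ = ((a : ℚ).den : ℚ) * (e : ℚ) * (a : ℚ) := by ring
    · rintro x y hxc hyc ⟨mx, hmx⟩ ⟨my, hmy⟩
      refine ⟨mx + my, ?_⟩
      push_cast
      rw [hmx, hmy]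
      ring
  exact ⟨d, hd0, fun x hx => hmem ⟨x, hx⟩⟩

lemma forward_dir (M : AddSubmonoid ℚ) (hM : IsPuiseux M) (hMnt : M ≠ ⊥)
    (T : FGTransferTarget ↥M) :
    ∃ N : AddSubmonoid ℕ, (Set.univ \ (N : Set ℕ)).Finite ∧ Nonempty (↥M ≃+ ↥N) := by
  obtain ⟨d, hd0, hd⟩ := common_den M hM T
  let S : AddSubmonoid ℕ :=
    { carrier := {m : ℕ | ∃ x ∈ M, (m : ℚ) = (d : ℚ) * x}
      zero_mem' := ⟨0, M.zero_mem, by simp⟩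
      add_mem' := by
        rintro m n ⟨x, hx, hxe⟩ ⟨y, hy, hye⟩
        exact ⟨x + y, M.add_mem hx hy, by push_cast; rw [hxe, hye]; ring⟩ }
  have hSnt : ∃ s ∈ S, s ≠ 0 := by
    have hex : ∃ x ∈ M, x ≠ 0 := by
      by_contra h
      push_neg at h
      refine hMnt ?_
      ext x
      simp only [AddSubmonoid.mem_bot]
      exact ⟨fun hx => h x hx, fun hx => hx ▸ M.zero_mem⟩
    obtain ⟨x, hx, hx0⟩ := hex
    obtain ⟨m, hm⟩ := hd x hx
    refine ⟨m, ⟨x, hx, hm⟩, ?_⟩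
    intro h0
    rw [h0] at hm
    have hxpos : 0 < x := lt_of_le_of_ne (hM x hx) (Ne.symm hx0)
    have hdq : (0:ℚ) < (d : ℚ) := by exact_mod_cast hd0
    have h1 : (0:ℚ) < (d:ℚ) * x := mul_pos hdq hxpos
    rw [← hm] at h1
    norm_num at h1
  obtain ⟨g, N, hg0, hNfin, hSN, hNS⟩ := exists_cofinite S hSnt
  have hgq : ((g : ℕ) : ℚ) ≠ 0 := by exact_mod_cast hg0.ne'
  refine ⟨N, hNfin, mkIso M N ((d : ℚ) / (g : ℚ))
    (div_ne_zero (by exact_mod_cast hd0.ne') hgq) ?_ ?_⟩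
  · intro x hx
    obtain ⟨m, hm⟩ := hd x hx
    obtain ⟨n, hn, hmn⟩ := hSN m ⟨x, hx, hm⟩
    refine ⟨n, hn, ?_⟩
    have h2 : ((m : ℕ) : ℚ) = (g : ℚ) * (n : ℚ) := by exact_mod_cast congrArg (Nat.cast (R := ℚ)) hmn
    rw [div_mul_eq_mul_div, eq_div_iff hgq, ← hm, h2]
    ring
  · intro n hn
    obtain ⟨x, hx, hxe⟩ := hNS n hn
    refine ⟨x, hx, ?_⟩
    rw [div_mul_eq_mul_div, eq_div_iff hgq, ← hxe]
    push_cast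
    ring


/-- A nontrivial Puiseux monoid admits a transfer homomorphism to a finitely
generated commutative cancellative monoid iff it is isomorphic to a numerical
monoid (a cofinite additive submonoid of `ℕ`). -/
theorem stmt5 (M : AddSubmonoid ℚ) (hM : IsPuiseux M) (hMnt : M ≠ ⊥) :
    Nonempty (FGTransferTarget ↥M) ↔
      ∃ N : AddSubmonoid ℕ, (Set.univ \ (N : Set ℕ)).Finite ∧
        Nonempty (↥M ≃+ ↥N) := by
  constructor
  · rintro ⟨T⟩
    exact forward_dir M hM hMnt T
  · rintro ⟨N, hN, ⟨e⟩⟩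
    exact backward_dir M hN e
end

section
/- Let M be the Puiseux monoid generated by {1/p : p an odd prime}. Then the map θ : M → ℤ/2ℤ defined by θ(0) = 0 and θ(r) = n(r) mod 2 for r ∈ M \ {0} (where n(r) is the numerator of r in lowest terms) is a surjective monoid homomorphism. -/
private lemma zmod2_of_odd {n : ℕ} (h : Odd n) : (n : ZMod 2) = 1 := by
  have := (Nat.odd_iff).mp h
  calc (n : ZMod 2) = ((n % 2 : ℕ) : ZMod 2) := (ZMod.natCast_mod n 2).symm
    _ = 1 := by rw [this]; norm_num

private lemma num_add_mod2 {x y : ℚ} (hx : Odd x.den) (hy : Odd y.den) :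
    ((x + y).num : ZMod 2) = (x.num : ZMod 2) + (y.num : ZMod 2) := by
  have hz : Odd (x + y).den := by
    have hd := Rat.add_den_dvd x y
    rcases Nat.even_or_odd (x + y).den with he | ho
    · exfalso
      have : Even (x.den * y.den) := (even_iff_two_dvd).mpr ((even_iff_two_dvd.mp he).trans hd)
      rcases Nat.even_mul.mp this with h | h
      · exact (Nat.not_even_iff_odd.mpr hx) h
      · exact (Nat.not_even_iff_odd.mpr hy) h
    · exact ho
  -- integer identity
  have key : (x + y).num * (x.den * y.den : ℤ) =
      (x.num * y.den + y.num * x.den) * ((x + y).den : ℤ) := by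
    have h1 : ((x + y).num : ℚ) * ((x.den : ℚ) * y.den) =
        ((x.num : ℚ) * y.den + (y.num : ℚ) * x.den) * ((x + y).den : ℚ) := by
      have hx0 : (x.den : ℚ) ≠ 0 := by exact_mod_cast x.den_ne_zero
      have hy0 : (y.den : ℚ) ≠ 0 := by exact_mod_cast y.den_ne_zero
      have hz0 : ((x + y).den : ℚ) ≠ 0 := by exact_mod_cast (x + y).den_ne_zero
      have e1 : ((x + y).num : ℚ) = (x + y) * ((x + y).den : ℚ) := by
        exact (Rat.mul_den_eq_num _).symm
      have e2 : (x : ℚ) * (x.den : ℚ) = (x.num : ℚ) := by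
        exact Rat.mul_den_eq_num _
      have e3 : (y : ℚ) * (y.den : ℚ) = (y.num : ℚ) := by
        exact Rat.mul_den_eq_num _
      rw [e1, ← e2, ← e3]
      ring
    exact_mod_cast h1
  have := congrArg (fun n : ℤ => (n : ZMod 2)) key
  simp only [Int.cast_mul, Int.cast_add, Int.cast_natCast, zmod2_of_odd hx,
    zmod2_of_odd hy, zmod2_of_odd hz, mul_one, one_mul] at this
  simpa using this

/-- Let `M = ⟨1/p : p an odd prime⟩ ⊆ ℚ≥0`. The map `θ : M → ℤ/2ℤ` sending `0`
to `0` and a nonzero `r` to its numerator mod `2` is a surjective monoid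
homomorphism. -/
theorem stmt6 (M : AddSubmonoid ℚ)
    (hM : M = AddSubmonoid.closure {q : ℚ | ∃ p : ℕ, p.Prime ∧ Odd p ∧ q = 1 / p}) :
    ∃ θ : ↥M →+ ZMod 2, Function.Surjective θ ∧
      (θ 0 = 0) ∧ ∀ x : ↥M, (x : ℚ) ≠ 0 → θ x = ((x : ℚ).num : ZMod 2) := by
  -- every element of M has odd denominator
  have hodd : ∀ x ∈ M, Odd (x : ℚ).den := by
    intro x hx
    rw [hM] at hx
    induction hx using AddSubmonoid.closure_induction with
    | mem q hq =>
      obtain ⟨p, hp, hpo, rfl⟩ := hq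
      have : ((1 : ℚ) / p).den = p := by
        rw [one_div, Rat.inv_natCast_den_of_pos hp.pos]
      rw [this]; exact hpo
    | zero => simp
    | add a b _ _ ha hb =>
      rcases Nat.even_or_odd (a + b).den with he | ho
      · exfalso
        have : Even (a.den * b.den) := (even_iff_two_dvd).mpr
          ((even_iff_two_dvd.mp he).trans (Rat.add_den_dvd a b))
        rcases Nat.even_mul.mp this with h | h
        · exact (Nat.not_even_iff_odd.mpr ha) h
        · exact (Nat.not_even_iff_odd.mpr hb) h
      · exact ho
  refine ⟨{ toFun := fun x => ((x : ℚ).num : ZMod 2),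
            map_zero' := by simp,
            map_add' := fun a b => num_add_mod2 (hodd a a.2) (hodd b b.2) }, ?_, by simp, ?_⟩
  · -- surjective
    have h3 : (1 : ℚ) / 3 ∈ M := by
      rw [hM]
      exact AddSubmonoid.subset_closure ⟨3, by norm_num, by decide, by norm_num⟩
    intro c
    fin_cases c
    · exact ⟨0, by simp; rfl⟩
    · refine ⟨⟨1/3, h3⟩, ?_⟩
      show (((1 : ℚ)/3).num : ZMod 2) = 1
      norm_num
  · intro x _
    rfl
end

section
/- The set of atoms of the Puiseux monoid M = ⟨1/p : p an odd prime⟩ is exactly {1/p : p an odd prime}; in particular M is atomic. -/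
namespace Stmt7Aux

abbrev S : Set ℚ := {q : ℚ | ∃ p : ℕ, p.Prime ∧ Odd p ∧ q = 1 / p}

lemma gen_pos {x : ℚ} (hx : x ∈ S) : 0 < x := by
  obtain ⟨q, hq, -, rfl⟩ := hx
  have : (0 : ℚ) < q := by exact_mod_cast hq.pos
  positivity

/-- Any multiset of generators avoiding `1/p` has sum `n/N` with `p ∤ N`. -/
lemma sum_form (p : ℕ) (hp : p.Prime) :
    ∀ l : Multiset ℚ, (∀ x ∈ l, ∃ q : ℕ, q.Prime ∧ q ≠ p ∧ x = 1 / q) →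
      ∃ n N : ℕ, N ≠ 0 ∧ ¬ p ∣ N ∧ l.sum = (n : ℚ) / N := by
  intro l
  induction l using Multiset.induction with
  | empty => intro _; exact ⟨0, 1, one_ne_zero, by simpa using hp.one_lt.ne', by simp⟩
  | cons x l ih =>
    intro h
    obtain ⟨n, N, hN0, hpN, hsum⟩ := ih fun y hy => h y (Multiset.mem_cons_of_mem hy)
    obtain ⟨q, hq, hqp, rfl⟩ := h _ (Multiset.mem_cons_self _ _)
    refine ⟨N + n * q, q * N, Nat.mul_ne_zero hq.pos.ne' hN0, ?_, ?_⟩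
    · rw [hp.dvd_mul]
      rintro (hd | hd)
      · exact hqp ((Nat.prime_dvd_prime_iff_eq hp hq).mp hd).symm
      · exact hpN hd
    · have hq0 : (q : ℚ) ≠ 0 := by exact_mod_cast hq.pos.ne'
      have hN0' : (N : ℚ) ≠ 0 := by exact_mod_cast hN0
      rw [Multiset.sum_cons, hsum]
      push_cast
      field_simp

/-- A multiset of generators summing to `1/p` is exactly `{1/p}`. -/
lemma key (p : ℕ) (hp : p.Prime) (l : Multiset ℚ) (hl : ∀ x ∈ l, x ∈ S)
    (hs : l.sum = 1 / p) : l = {(1 : ℚ) / p} := by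
  have hp0 : (0 : ℚ) < p := by exact_mod_cast hp.pos
  classical
  set l₁ := l.filter (fun x => x = 1 / (p:ℚ)) with hl₁
  set l₂ := l.filter (fun x => ¬ x = 1 / (p:ℚ)) with hl₂
  have hsplit : l₁ + l₂ = l := Multiset.filter_add_not _ l
  have hl₁rep : l₁ = Multiset.replicate (Multiset.card l₁) ((1 : ℚ) / p) :=
    Multiset.eq_replicate_card.mpr fun x hx => (Multiset.mem_filter.mp hx).2
  have hl₂gen : ∀ x ∈ l₂, ∃ q : ℕ, q.Prime ∧ q ≠ p ∧ x = 1 / q := by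
    intro x hx
    obtain ⟨q, hq, -, rfl⟩ := hl x (Multiset.mem_of_mem_filter hx)
    refine ⟨q, hq, fun hqp => ?_, rfl⟩
    exact (Multiset.mem_filter.mp hx).2 (by rw [hqp])
  obtain ⟨n, N, hN0, hpN, hsum2⟩ := sum_form p hp l₂ hl₂gen
  have hN0' : (0 : ℚ) < N := by exact_mod_cast Nat.pos_of_ne_zero hN0
  set k := Multiset.card l₁ with hk
  have h' : l.sum = (k : ℚ) * (1 / p) + (n : ℚ) / N := by
    rw [← hsplit, Multiset.sum_add, hl₁rep, Multiset.sum_replicate, nsmul_eq_mul, hsum2]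
  have hsum : (k : ℚ) * (1 / p) + (n : ℚ) / N = 1 / p := by rw [← h', hs]
  have hnonneg : (0 : ℚ) ≤ (n : ℚ) / N := by positivity
  -- k ≤ 1
  have hk1 : k ≤ 1 := by
    by_contra hk2
    push_neg at hk2
    have : (2 : ℚ) ≤ k := by exact_mod_cast hk2
    have : (2 : ℚ) * (1 / p) ≤ 1 / p := by
      calc (2 : ℚ) * (1 / p) ≤ (k : ℚ) * (1 / p) := by
            apply mul_le_mul_of_nonneg_right this (by positivity)
        _ ≤ (k : ℚ) * (1 / p) + (n : ℚ) / N := le_add_of_nonneg_right hnonneg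
        _ = 1 / p := hsum
    nlinarith [one_div_pos.mpr hp0]
  interval_cases k
  · -- k = 0 : 1/p = n/N with p ∤ N, contradiction
    exfalso
    simp only [Nat.cast_zero, zero_mul, zero_add] at hsum
    have : (N : ℚ) = n * p := by
      field_simp at hsum
      linarith [hsum]
    have hNnat : N = n * p := by exact_mod_cast this
    exact hpN ⟨n, by rw [hNnat, Nat.mul_comm]⟩
  · -- k = 1 : l₂ sums to 0, hence empty
    have h20 : l₂.sum = 0 := by
      simp only [Nat.cast_one, one_mul] at hsum
      linarith [hsum, hsum2 ▸ hsum]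
    have hl₂empty : l₂ = 0 := by
      by_contra hne
      obtain ⟨x, hx⟩ := Multiset.exists_mem_of_ne_zero hne
      have hx0 : x = 0 :=
        Multiset.all_zero_of_le_zero_le_of_sum_eq_zero
          (fun y hy => (gen_pos (hl y (Multiset.mem_of_mem_filter hy))).le) h20 x hx
      exact (gen_pos (hl x (Multiset.mem_of_mem_filter hx))).ne' (hx0 ▸ rfl)
    rw [← hsplit, hl₂empty, hl₁rep]
    simp [← hk]

end Stmt7Aux

open Stmt7Aux in
/-- The set of atoms of the Puiseux monoid `M = ⟨1/p : p an odd prime⟩` is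
exactly `{1/p : p an odd prime}`; in particular `M` is atomic. -/
theorem stmt7 (M : AddSubmonoid ℚ)
    (hM : M = AddSubmonoid.closure {q : ℚ | ∃ p : ℕ, p.Prime ∧ Odd p ∧ q = 1 / p}) :
    {a : ℚ | IsAtomOf M a} = {q : ℚ | ∃ p : ℕ, p.Prime ∧ Odd p ∧ q = 1 / p} ∧
      IsAtomicMonoid M := by
  subst hM
  have hgen_atom : ∀ x ∈ S, IsAtomOf (AddSubmonoid.closure S) x := by
    intro x hx
    refine ⟨AddSubmonoid.subset_closure hx, (gen_pos hx).ne', ?_⟩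
    rintro u v hu hv heq
    obtain ⟨p, hp, -, rfl⟩ := hx
    obtain ⟨lu, hlu, hlusum⟩ := AddSubmonoid.exists_multiset_of_mem_closure hu
    obtain ⟨lv, hlv, hlvsum⟩ := AddSubmonoid.exists_multiset_of_mem_closure hv
    have hsum : (lu + lv).sum = 1 / p := by
      rw [Multiset.sum_add, hlusum, hlvsum, heq]
    have hmem : ∀ y ∈ lu + lv, y ∈ S := by
      intro y hy
      rcases Multiset.mem_add.mp hy with h | h
      exacts [hlu y h, hlv y h]
    have hkey := key p hp (lu + lv) hmem hsum
    have hcard : Multiset.card lu + Multiset.card lv = 1 := by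
      have := congrArg Multiset.card hkey
      simpa using this
    rcases Nat.add_eq_one_iff.mp hcard with ⟨h1, h2⟩ | ⟨h1, h2⟩
    · left
      rw [← hlusum, Multiset.card_eq_zero.mp h1, Multiset.sum_zero]
    · right
      rw [← hlvsum, Multiset.card_eq_zero.mp h2, Multiset.sum_zero]
  constructor
  · ext a
    simp only [Set.mem_setOf_eq]
    constructor
    · rintro ⟨haM, ha0, hatom⟩
      obtain ⟨l, hl, hlsum⟩ := AddSubmonoid.exists_multiset_of_mem_closure haM
      rcases Multiset.empty_or_exists_mem l with rfl | ⟨x, hx⟩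
      · exact absurd hlsum.symm (by simpa using ha0)
      · obtain ⟨l', rfl⟩ := Multiset.exists_cons_of_mem hx
        have hx' : x ∈ S := hl x hx
        have hxM : x ∈ AddSubmonoid.closure S := AddSubmonoid.subset_closure hx'
        have hl'M : l'.sum ∈ AddSubmonoid.closure S :=
          AddSubmonoid.multiset_sum_mem _ _ fun y hy =>
            AddSubmonoid.subset_closure (hl y (Multiset.mem_cons_of_mem hy))
        have := hatom x l'.sum hxM hl'M (by rw [← hlsum, Multiset.sum_cons])
        rcases this with h | h
        · exact absurd h (gen_pos hx').ne'
        · rw [← hlsum, Multiset.sum_cons, h, add_zero]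
          exact hx'
    · exact fun h => hgen_atom a h
  · intro x hx
    obtain ⟨l, hl, hlsum⟩ := AddSubmonoid.exists_multiset_of_mem_closure hx
    exact ⟨l, fun a ha => hgen_atom a (hl a ha), hlsum⟩
end

section
/- Every nontrivial Puiseux monoid is primary: its only divisor-closed submonoids are {0} and M itself. -/
/-- `S` is a divisor-closed submonoid of `M`: whenever `x ∈ M` divides an
element of `S` in `M`, then `x ∈ S`. -/
def IsDivisorClosedIn (M S : AddSubmonoid ℚ) : Prop :=
  S ≤ M ∧ ∀ x ∈ M, ∀ s ∈ S, (∃ c ∈ M, s = x + c) → x ∈ S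

/-- Every nontrivial Puiseux monoid is primary: its only divisor-closed
submonoids are `{0}` and `M` itself. -/
theorem stmt8 (M : AddSubmonoid ℚ) (hM : IsPuiseux M) (hMnt : M ≠ ⊥)
    (S : AddSubmonoid ℚ) (hS : IsDivisorClosedIn M S) :
    S = ⊥ ∨ S = M := by
  by_cases hSbot : S = ⊥
  · exact Or.inl hSbot
  right
  obtain ⟨s, hsS, hs0⟩ : ∃ s ∈ S, s ≠ 0 := by
    by_contra h
    push_neg at h
    exact hSbot (le_antisymm (fun x hx => by simpa using h x hx) bot_le)
  have hsM := hS.1 hsS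
  have hspos : 0 < s := lt_of_le_of_ne (hM s hsM) (Ne.symm hs0)
  apply le_antisymm hS.1
  intro x hxM
  rcases eq_or_lt_of_le (hM x hxM) with hx0 | hxpos
  · rw [← hx0]; exact S.zero_mem
  -- find m n : ℕ, m • x = n • s, m ≥ 1
  set m : ℕ := s.num.natAbs * x.den with hm
  set n : ℕ := x.num.natAbs * s.den with hn
  have hxnum : (x.num.natAbs : ℚ) = x.num := by
    rw [Nat.cast_natAbs]
    exact_mod_cast abs_of_pos (Rat.num_pos.mpr hxpos)
  have hsnum : (s.num.natAbs : ℚ) = s.num := by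
    rw [Nat.cast_natAbs]
    exact_mod_cast abs_of_pos (Rat.num_pos.mpr hspos)
  have key : (m : ℚ) * x = (n : ℚ) * s := by
    have hx' : (x.den : ℚ) * x = x.num := by
      rw [mul_comm]; exact_mod_cast Rat.mul_den_eq_num x
    have hs' : (s.den : ℚ) * s = s.num := by
      rw [mul_comm]; exact_mod_cast Rat.mul_den_eq_num s
    rw [hm, hn]
    push_cast
    rw [mul_assoc, hx', mul_assoc, hs', hxnum, hsnum, mul_comm]
  have hm1 : 1 ≤ m := by
    have h1 : 0 < s.num.natAbs := Int.natAbs_pos.mpr (Rat.num_ne_zero.mpr hs0)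
    exact Nat.one_le_iff_ne_zero.mpr (Nat.mul_ne_zero h1.ne' x.pos.ne')
  have hns : n • s ∈ S := AddSubmonoid.nsmul_mem S hsS n
  apply hS.2 x hxM (n • s) hns
  refine ⟨(m - 1) • x, AddSubmonoid.nsmul_mem M hxM _, ?_⟩
  have : n • s = m • x := by
    rw [nsmul_eq_mul, nsmul_eq_mul, key]
  rw [this, nsmul_eq_mul, nsmul_eq_mul]
  have : ((m - 1 : ℕ) : ℚ) = (m : ℚ) - 1 := by
    push_cast [Nat.cast_sub hm1]; ring
  rw [this]; ring
end

section
/- Every nontrivial finitely generated Puiseux monoid is strongly primary, i.e., it is primary, a BF-monoid, and there exist n ∈ ℕ and a finite subset S ⊆ M \ {0} such that n·x ∈ S + M for every nonzero x ∈ M. -/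
/-- `M` is a BF-monoid: every element has a factorization into atoms and only
finitely many factorization lengths. -/
def IsBFMonoid (M : AddSubmonoid ℚ) : Prop :=
  ∀ x ∈ M, (∃ l : Multiset ℚ, (∀ a ∈ l, IsAtomOf M a) ∧ l.sum = x) ∧
    {n : ℕ | ∃ l : Multiset ℚ, (∀ a ∈ l, IsAtomOf M a) ∧ l.sum = x ∧
      Multiset.card l = n}.Finite

/-- `M` is primary: nontrivial, and its only divisor-closed submonoids are
`{0}` and `M`. -/
def IsPrimaryMonoid (M : AddSubmonoid ℚ) : Prop :=
  M ≠ ⊥ ∧ ∀ S : AddSubmonoid ℚ, IsDivisorClosedIn M S → S = ⊥ ∨ S = M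

/-- `M` is finitary: a BF-monoid such that `n • (M \ {0}) ⊆ S + M` for some
`n ≥ 1` and finite `S ⊆ M \ {0}`. -/
def IsFinitaryMonoid (M : AddSubmonoid ℚ) : Prop :=
  IsBFMonoid M ∧ ∃ (n : ℕ) (S : Finset ℚ), 0 < n ∧ (↑S : Set ℚ) ⊆ (M : Set ℚ) \ {0} ∧
    ∀ x ∈ M, x ≠ 0 → ∃ s ∈ S, ∃ m ∈ M, (n : ℚ) * x = s + m

/-- Auxiliary: a f.g. submonoid of `ℚ` has a common denominator. -/
lemma puiseux_common_den (M : AddSubmonoid ℚ) (hfg : M.FG) :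
    ∃ d : ℕ, 0 < d ∧ ∀ x ∈ M, ∃ z : ℤ, (d : ℚ) * x = z := by
  obtain ⟨T, hT⟩ := hfg
  refine ⟨∏ t ∈ T, t.den, Finset.prod_pos (fun t _ => t.pos), ?_⟩
  intro x hx
  rw [← hT] at hx
  induction hx using AddSubmonoid.closure_induction with
  | mem t ht =>
    obtain ⟨e, he⟩ := Finset.dvd_prod_of_mem (fun t : ℚ => t.den) ht
    refine ⟨(e : ℤ) * t.num, ?_⟩
    rw [he]
    push_cast
    rw [mul_comm (t.den : ℚ) e, mul_assoc, Rat.den_mul_eq_num]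
  | zero => exact ⟨0, by simp⟩
  | add a b _ _ iha ihb =>
    obtain ⟨z₁, hz₁⟩ := iha
    obtain ⟨z₂, hz₂⟩ := ihb
    exact ⟨z₁ + z₂, by rw [mul_add, hz₁, hz₂]; push_cast; ring⟩

lemma exists_mem_ne_zero {S : AddSubmonoid ℚ} (h : S ≠ ⊥) : ∃ s ∈ S, s ≠ 0 := by
  by_contra hc
  push_neg at hc
  exact h ((AddSubmonoid.eq_bot_iff_forall S).2 hc)

/-- Key structure lemma: a nontrivial f.g. Puiseux monoid lies on an arithmetic
ray `qℕ` and contains all sufficiently large multiples of `q`. -/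
lemma puiseux_structure (M : AddSubmonoid ℚ) (hM : IsPuiseux M) (hMnt : M ≠ ⊥)
    (hfg : M.FG) :
    ∃ q : ℚ, 0 < q ∧ (∀ x ∈ M, ∃ n : ℕ, x = n * q) ∧
      ∃ T : ℕ, ∀ m : ℕ, T ≤ m → (m : ℚ) * q ∈ M := by
  obtain ⟨d, hd, hden⟩ := puiseux_common_den M hfg
  have hd0 : (d : ℚ) ≠ 0 := by positivity
  -- the difference group, as a subgroup of ℤ after clearing denominators
  set H : AddSubgroup ℤ :=
    { carrier := {z : ℤ | ∃ a ∈ M, ∃ b ∈ M, (z : ℚ) = d * a - d * b}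
      zero_mem' := ⟨0, M.zero_mem, 0, M.zero_mem, by simp⟩
      add_mem' := by
        rintro z₁ z₂ ⟨a₁, ha₁, b₁, hb₁, h₁⟩ ⟨a₂, ha₂, b₂, hb₂, h₂⟩
        exact ⟨a₁ + a₂, M.add_mem ha₁ ha₂, b₁ + b₂, M.add_mem hb₁ hb₂, by
          push_cast [h₁, h₂]; ring⟩
      neg_mem' := by
        rintro z ⟨a, ha, b, hb, h⟩
        exact ⟨b, hb, a, ha, by push_cast [h]; ring⟩ } with hHdef
  have memH : ∀ z : ℤ, z ∈ H ↔ ∃ a ∈ M, ∃ b ∈ M, (z : ℚ) = d * a - d * b := by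
    intro z; rfl
  obtain ⟨g, hg⟩ := Int.subgroup_cyclic H
  have hdvd : ∀ z : ℤ, z ∈ H → g ∣ z := by
    intro z hz
    rw [hg, AddSubgroup.mem_closure_singleton] at hz
    obtain ⟨n, hn⟩ := hz
    exact ⟨n, by rw [← hn, smul_eq_mul]; ring⟩
  have hgH : g ∈ H := by
    rw [hg]
    exact AddSubgroup.subset_closure (Set.mem_singleton g)
  have hMz : ∀ x ∈ M, ∃ z : ℤ, (z : ℚ) = d * x ∧ z ∈ H := by
    intro x hx
    obtain ⟨z, hz⟩ := hden x hx
    exact ⟨z, hz.symm, (memH z).2 ⟨x, hx, 0, M.zero_mem, by rw [← hz]; ring⟩⟩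
  -- g ≠ 0
  obtain ⟨x₀, hx₀M, hx₀⟩ := exists_mem_ne_zero hMnt
  obtain ⟨z₀, hz₀, hz₀H⟩ := hMz x₀ hx₀M
  have hg0 : g ≠ 0 := by
    rintro rfl
    obtain ⟨c, hc⟩ := hdvd z₀ hz₀H
    apply hx₀
    have : (z₀ : ℚ) = 0 := by rw [hc]; simp
    rw [hz₀] at this
    exact (mul_eq_zero.1 this).resolve_left hd0
  set q : ℚ := (g.natAbs : ℚ) / d with hqdef
  have hq : 0 < q := by
    apply div_pos _ (by exact_mod_cast hd)
    exact_mod_cast Int.natAbs_pos.2 hg0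
  -- every element of M is a natural multiple of q
  have hrep : ∀ x ∈ M, ∃ n : ℕ, x = n * q := by
    intro x hx
    obtain ⟨z, hz, hzH⟩ := hMz x hx
    have hz0 : 0 ≤ z := by
      have : (0 : ℚ) ≤ (z : ℚ) := by
        rw [hz]; exact mul_nonneg (by positivity) (hM x hx)
      exact_mod_cast this
    obtain ⟨m, hm⟩ := (Int.natAbs_dvd_natAbs).2 (hdvd z hzH)
    refine ⟨m, ?_⟩
    have hzq : (z : ℚ) = (z.natAbs : ℚ) := by
      rw [← Int.cast_natCast (R := ℚ) z.natAbs, Int.natAbs_of_nonneg hz0]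
    have : x = (z : ℚ) / d := by field_simp; linarith [hz]
    rw [this, hzq, hm]
    push_cast
    rw [hqdef]
    ring
  -- q is a difference of two elements of M
  have hdiff : ∃ a ∈ M, ∃ b ∈ M, q = a - b := by
    rcases le_or_gt 0 g with hge | hlt
    · obtain ⟨a, ha, b, hb, hab⟩ := (memH g).1 hgH
      refine ⟨a, ha, b, hb, ?_⟩
      have : (g.natAbs : ℚ) = (g : ℚ) := by
        rw [← Int.cast_natCast (R := ℚ) g.natAbs, Int.natAbs_of_nonneg hge]
      rw [hqdef, this, hab]
      field_simp
    · obtain ⟨a, ha, b, hb, hab⟩ := (memH (-g)).1 (H.neg_mem hgH)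
      refine ⟨a, ha, b, hb, ?_⟩
      have : (g.natAbs : ℚ) = ((-g : ℤ) : ℚ) := by
        have h2 : (g.natAbs : ℤ) = -g := by omega
        rw [← Int.cast_natCast (R := ℚ) g.natAbs, h2]
      rw [hqdef, this, hab]
      field_simp
  refine ⟨q, hq, hrep, ?_⟩
  obtain ⟨a, ha, b, hb, hab⟩ := hdiff
  obtain ⟨B, hB⟩ := hrep b hb
  have haq : a = (B : ℚ) * q + q := by rw [← hB]; linarith [hab]
  rcases Nat.eq_zero_or_pos B with hB0 | hBpos
  · -- b = 0, so q = a ∈ M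
    have hqM : q ∈ M := by
      have : a = q := by rw [haq, hB0]; push_cast; ring
      rwa [← this]
    refine ⟨0, fun m _ => ?_⟩
    have : (m : ℚ) * q = m • q := by rw [nsmul_eq_mul]
    rw [this]
    exact AddSubmonoid.nsmul_mem M hqM m
  · refine ⟨B * B, fun m hm => ?_⟩
    set r := m % B with hr
    set t := m / B with ht
    have hrB : r < B := Nat.mod_lt _ hBpos
    have htB : B ≤ t := (Nat.le_div_iff_mul_le hBpos).2 (by omega)
    have hrt : r ≤ t := le_trans (le_of_lt hrB) htB
    obtain ⟨u, hu⟩ := Nat.exists_eq_add_of_le hrt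
    have hmeq : m = B * t + r := (Nat.div_add_mod m B).symm
    have key : (m : ℚ) * q = u • b + r • a := by
      rw [nsmul_eq_mul, nsmul_eq_mul, hB, haq, hmeq, hu]
      push_cast
      ring
    rw [key]
    exact M.add_mem (AddSubmonoid.nsmul_mem M hb u) (AddSubmonoid.nsmul_mem M ha r)

/-- Factorization into atoms exists for each element of a discrete monoid. -/
lemma puiseux_exists_factorization (M : AddSubmonoid ℚ) (q : ℚ) (hq : 0 < q)
    (hrep : ∀ x ∈ M, ∃ n : ℕ, x = n * q) :
    ∀ n : ℕ, ∀ x ∈ M, x = n * q →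
      ∃ l : Multiset ℚ, (∀ a ∈ l, IsAtomOf M a) ∧ l.sum = x := by
  intro n
  induction n using Nat.strong_induction_on with
  | _ n ih =>
    intro x hx hxn
    by_cases hx0 : x = 0
    · exact ⟨0, by simp, by simp [hx0]⟩
    by_cases hat : IsAtomOf M x
    · refine ⟨{x}, ?_, by simp⟩
      intro a ha
      rw [Multiset.mem_singleton] at ha
      rwa [ha]
    · have hdec : ∃ u v : ℚ, u ∈ M ∧ v ∈ M ∧ x = u + v ∧ u ≠ 0 ∧ v ≠ 0 := by
        unfold IsAtomOf at hat
        push_neg at hat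
        obtain ⟨u, v, hu, hv, hsum, hu0, hv0⟩ := hat hx hx0
        exact ⟨u, v, hu, hv, hsum, hu0, hv0⟩
      obtain ⟨u, v, hu, hv, hsum, hu0, hv0⟩ := hdec
      obtain ⟨n₁, hn₁⟩ := hrep u hu
      obtain ⟨n₂, hn₂⟩ := hrep v hv
      have hn₁0 : 0 < n₁ := by
        rcases Nat.eq_zero_or_pos n₁ with h | h
        · exact absurd (by rw [hn₁, h]; simp) hu0
        · exact h
      have hn₂0 : 0 < n₂ := by
        rcases Nat.eq_zero_or_pos n₂ with h | h
        · exact absurd (by rw [hn₂, h]; simp) hv0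
        · exact h
      have hnn : n₁ + n₂ = n := by
        have h1 : ((n₁ + n₂ : ℕ) : ℚ) * q = (n : ℚ) * q := by
          push_cast
          rw [add_mul, ← hn₁, ← hn₂, ← hsum, hxn]
        have h2 : ((n₁ + n₂ : ℕ) : ℚ) = (n : ℚ) :=
          mul_right_cancel₀ (ne_of_gt hq) h1
        exact_mod_cast h2
      obtain ⟨l₁, hl₁, hs₁⟩ := ih n₁ (by omega) u hu hn₁
      obtain ⟨l₂, hl₂, hs₂⟩ := ih n₂ (by omega) v hv hn₂
      refine ⟨l₁ + l₂, ?_, by rw [Multiset.sum_add, hs₁, hs₂, hsum]⟩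
      intro a ha
      rcases Multiset.mem_add.1 ha with h | h
      · exact hl₁ a h
      · exact hl₂ a h

/-- Every nontrivial finitely generated Puiseux monoid is strongly primary. -/
theorem stmt9 (M : AddSubmonoid ℚ) (hM : IsPuiseux M) (hMnt : M ≠ ⊥) (hfg : M.FG) :
    IsPrimaryMonoid M ∧ IsFinitaryMonoid M := by
  obtain ⟨q, hq, hrep, T, hT⟩ := puiseux_structure M hM hMnt hfg
  have hrep' : ∀ x ∈ M, x ≠ 0 → ∃ n : ℕ, 0 < n ∧ x = n * q := by
    intro x hx hx0
    obtain ⟨n, hn⟩ := hrep x hx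
    refine ⟨n, ?_, hn⟩
    rcases Nat.eq_zero_or_pos n with h | h
    · exact absurd (by rw [hn, h]; simp) hx0
    · exact h
  constructor
  · -- primary
    refine ⟨hMnt, fun S hS => ?_⟩
    by_cases hSbot : S = ⊥
    · exact Or.inl hSbot
    · right
      obtain ⟨s, hsS, hs0⟩ := exists_mem_ne_zero hSbot
      apply le_antisymm hS.1
      intro x hx
      obtain ⟨n, hn⟩ := hrep x hx
      obtain ⟨k, hk0, hk⟩ := hrep' s (hS.1 hsS) hs0
      have hjs : (n + T) • s ∈ S := AddSubmonoid.nsmul_mem S hsS (n + T)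
      apply hS.2 x hx _ hjs
      have hle : n ≤ (n + T) * k := by nlinarith
      have hTle : T ≤ (n + T) * k - n := by
        have : n + T ≤ (n + T) * k := by nlinarith
        omega
      refine ⟨(((n + T) * k - n : ℕ) : ℚ) * q, hT _ hTle, ?_⟩
      rw [nsmul_eq_mul, hk, hn]
      have hcast : (((n + T) * k - n : ℕ) : ℚ) = ((n + T) * k : ℕ) - (n : ℕ) := by
        push_cast [Nat.cast_sub hle]
        ring
      rw [hcast]
      push_cast
      ring
  · constructor
    · -- BF monoid
      intro x hx
      obtain ⟨n, hn⟩ := hrep x hx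
      constructor
      · exact puiseux_exists_factorization M q hq hrep n x hx hn
      · apply Set.Finite.subset (Set.finite_Iic n)
        rintro n' ⟨l, hl, hsum, hcard⟩
        have hqle : ∀ a ∈ l, q ≤ a := by
          intro a ha
          obtain ⟨haM, ha0, -⟩ := hl a ha
          obtain ⟨m, hm0, hm⟩ := hrep' a haM ha0
          rw [hm]
          nlinarith [(Nat.one_le_cast (α := ℚ)).2 hm0]
        have h1 := Multiset.card_nsmul_le_sum hqle
        rw [hsum, hn, nsmul_eq_mul, hcard] at h1
        have h2 : (n' : ℚ) ≤ (n : ℚ) := le_of_mul_le_mul_right h1 hq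
        exact_mod_cast h2
    · -- finitary
      have hs₀M : ((T + 1 : ℕ) : ℚ) * q ∈ M := hT (T + 1) (by omega)
      have hs₀0 : ((T + 1 : ℕ) : ℚ) * q ≠ 0 := by positivity
      refine ⟨2 * T + 2, {((T + 1 : ℕ) : ℚ) * q}, by omega, ?_, ?_⟩
      · intro y hy
        rw [Finset.coe_singleton, Set.mem_singleton_iff] at hy
        exact ⟨by rw [hy]; exact hs₀M, by rw [hy] at *; exact hs₀0⟩
      · intro x hx hx0
        obtain ⟨k, hk0, hk⟩ := hrep' x hx hx0
        refine ⟨((T + 1 : ℕ) : ℚ) * q, Finset.mem_singleton_self _,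
          (((2 * T + 2) * k - (T + 1) : ℕ) : ℚ) * q, ?_, ?_⟩
        · apply hT
          have : 2 * T + 2 ≤ (2 * T + 2) * k := by nlinarith
          omega
        · have hle : T + 1 ≤ (2 * T + 2) * k := by nlinarith
          have hcast : (((2 * T + 2) * k - (T + 1) : ℕ) : ℚ)
              = ((2 * T + 2) * k : ℕ) - ((T + 1 : ℕ) : ℚ) := by
            push_cast [Nat.cast_sub hle]
            ring
          rw [hk, hcast]
          push_cast
          ring
end

section
/- If M is a Puiseux monoid such that 0 is not a limit point of M \ {0} (i.e., inf(M \ {0}) > 0), then M is a BF-monoid: M is atomic and for every x ∈ M the set of lengths of factorizations of x into atoms is finite. -/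
lemma exists_fact (M : AddSubmonoid ℚ) (hM : IsPuiseux M) (ε : ℚ) (hε : 0 < ε)
    (hb : ∀ x ∈ M, x ≠ 0 → ε ≤ x) :
    ∀ n : ℕ, ∀ x ∈ M, x ≤ n * ε →
      ∃ l : Multiset ℚ, (∀ a ∈ l, IsAtomOf M a) ∧ l.sum = x := by
  intro n
  induction n with
  | zero =>
    intro x hx hle
    have : x = 0 := le_antisymm (by simpa using hle) (hM x hx)
    exact ⟨0, by simp, by simp [this]⟩
  | succ n ih =>
    intro x hx hle
    by_cases hx0 : x = 0
    · exact ⟨0, by simp, by simp [hx0]⟩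
    by_cases hat : ∀ u v : ℚ, u ∈ M → v ∈ M → x = u + v → u = 0 ∨ v = 0
    · exact ⟨{x}, by simpa using ⟨hx, hx0, hat⟩, by simp⟩
    · push_neg at hat
      obtain ⟨u, v, hu, hv, hxuv, hu0, hv0⟩ := hat
      have hεu := hb u hu hu0
      have hεv := hb v hv hv0
      have hun : u ≤ n * ε := by
        have : u + ε ≤ u + v := by linarith
        push_cast at hle ⊢
        linarith [hxuv ▸ hle]
      have hvn : v ≤ n * ε := by
        push_cast at hle ⊢
        linarith [hxuv ▸ hle]
      obtain ⟨l₁, hl₁, hs₁⟩ := ih u hu hun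
      obtain ⟨l₂, hl₂, hs₂⟩ := ih v hv hvn
      refine ⟨l₁ + l₂, ?_, by simp [hs₁, hs₂, hxuv]⟩
      intro a ha
      rcases Multiset.mem_add.1 ha with h | h
      · exact hl₁ a h
      · exact hl₂ a h

/-- If `0` is not a limit point of `M \ {0}`, then `M` is a BF-monoid: every
element has a factorization into atoms and only finitely many factorization
lengths. -/
theorem stmt10 (M : AddSubmonoid ℚ) (hM : IsPuiseux M)
    (h : ∃ ε : ℚ, 0 < ε ∧ ∀ x ∈ M, x ≠ 0 → ε ≤ x) :
    ∀ x ∈ M, (∃ l : Multiset ℚ, (∀ a ∈ l, IsAtomOf M a) ∧ l.sum = x) ∧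
      {n : ℕ | ∃ l : Multiset ℚ, (∀ a ∈ l, IsAtomOf M a) ∧ l.sum = x ∧
        Multiset.card l = n}.Finite := by
  obtain ⟨ε, hε, hb⟩ := h
  intro x hx
  constructor
  · obtain ⟨n, hn⟩ := exists_nat_ge (x / ε)
    refine exists_fact M hM ε hε hb n x hx ?_
    calc x = (x / ε) * ε := by field_simp
    _ ≤ n * ε := by exact mul_le_mul_of_nonneg_right hn hε.le
  · apply Set.Finite.subset (Set.finite_Icc 0 ⌈x / ε⌉.toNat)
    intro n hn
    obtain ⟨l, hl, hs, hc⟩ := hn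
    have hcard : (Multiset.card l : ℚ) * ε ≤ x := by
      have := Multiset.card_nsmul_le_sum (s := l) (a := ε)
        (fun a ha => hb a (hl a ha).1 (hl a ha).2.1)
      rw [hs] at this
      simpa [nsmul_eq_mul] using this
    have : (n : ℚ) ≤ x / ε := by
      rw [le_div_iff₀ hε]
      rw [← hc]; exact hcard
    constructor
    · exact Nat.zero_le n
    · have h2 : (n : ℤ) ≤ ⌈x / ε⌉ := by
        have := Int.ceil_mono (R := ℚ) this
        simpa using this
      have h3 : (0 : ℤ) ≤ ⌈x / ε⌉ := le_trans (by positivity) h2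
      exact (Int.le_toNat h3).2 h2
end

section
/- Let r ∈ ℚ with r > 1 whose denominator (in lowest terms) is greater than 1. Then the multiplicatively r-cyclic Puiseux monoid Mᵣ = ⟨rⁿ | n ∈ ℕ⟩ is finitary: it is a BF-monoid and d(r)·x ∈ {n(r)} + Mᵣ for every nonzero x ∈ Mᵣ. Consequently Mᵣ is strongly primary. -/
/-- For `r > 1` with denominator `> 1`, the monoid `Mᵣ = ⟨rⁿ | n ≥ 1⟩` is
finitary: it is a BF-monoid and `d(r)·x ∈ {n(r)} + Mᵣ` for every nonzero
`x ∈ Mᵣ`; consequently `Mᵣ` is strongly primary. -/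
theorem stmt12 (r : ℚ) (hr : 1 < r) (hd : 1 < r.den)
    (M : AddSubmonoid ℚ)
    (hM : M = AddSubmonoid.closure {q : ℚ | ∃ n : ℕ, 1 ≤ n ∧ q = r ^ n}) :
    IsBFMonoid M ∧
    (∀ x ∈ M, x ≠ 0 → ∃ m ∈ M, (r.den : ℚ) * x = (r.num : ℚ) + m) ∧
    IsFinitaryMonoid M ∧ IsPrimaryMonoid M := by
  have hq0 : (0:ℚ) < (r.den : ℚ) := by positivity
  have hqr : (r.den:ℚ) * r = (r.num:ℚ) := by
    rw [mul_comm]; exact_mod_cast Rat.mul_den_eq_num r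
  have hpq : (r.den:ℚ) < (r.num:ℚ) := by nlinarith
  have hp0 : (0:ℚ) < (r.num:ℚ) := lt_trans hq0 hpq
  have hp0' : (0:ℤ) < r.num := by exact_mod_cast hp0
  have hpn : ((r.num.toNat : ℕ):ℚ) = (r.num:ℚ) := by
    exact_mod_cast Int.toNat_of_nonneg hp0'.le
  -- generators are in M
  have hgen : ∀ n : ℕ, 1 ≤ n → r ^ n ∈ M := by
    intro n hn
    rw [hM]; exact AddSubmonoid.subset_closure ⟨n, hn, rfl⟩
  have hrM : r ∈ M := by simpa using hgen 1 le_rfl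
  -- every nonzero element of M is at least r
  have hge : ∀ x ∈ M, x = 0 ∨ r ≤ x := by
    intro x hx
    rw [hM] at hx
    refine AddSubmonoid.closure_induction ?_ ?_ ?_ hx
    · rintro x ⟨n, hn, rfl⟩
      exact Or.inr (le_self_pow₀ hr.le (by omega))
    · exact Or.inl rfl
    · rintro x y _ _ (rfl | hx) (rfl | hy)
      · simp
      · right; simpa using hy
      · right; simpa using hx
      · right; nlinarith
  have hx0 : ∀ x ∈ M, 0 ≤ x := by
    intro x hx
    rcases hge x hx with rfl | h
    · exact le_rfl
    · linarith
  -- factorizations into atoms exist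
  have hfac : ∀ n : ℕ, ∀ x ∈ M, x ≤ (n:ℚ) →
      ∃ l : Multiset ℚ, (∀ a ∈ l, IsAtomOf M a) ∧ l.sum = x := by
    intro n
    induction n with
    | zero =>
      intro x hx hxn
      have hx' : x = 0 := le_antisymm (by exact_mod_cast hxn) (hx0 x hx)
      exact ⟨0, by simp, by simp [hx']⟩
    | succ n ih =>
      intro x hx hxn
      by_cases h0 : x = 0
      · exact ⟨0, by simp, by simp [h0]⟩
      by_cases hat : ∀ u v : ℚ, u ∈ M → v ∈ M → x = u + v → u = 0 ∨ v = 0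
      · refine ⟨{x}, ?_, by simp⟩
        intro a ha
        rw [Multiset.mem_singleton] at ha
        subst ha
        exact ⟨hx, h0, hat⟩
      push_neg at hat
      obtain ⟨u, v, hu, hv, huv, hu0, hv0⟩ := hat
      have hru := (hge u hu).resolve_left hu0
      have hrv := (hge v hv).resolve_left hv0
      have hxn' : x ≤ (n:ℚ) + 1 := by push_cast at hxn; linarith
      obtain ⟨lu, hlu, hsu⟩ := ih u hu (by linarith)
      obtain ⟨lv, hlv, hsv⟩ := ih v hv (by linarith)
      refine ⟨lu + lv, ?_, ?_⟩
      · intro a ha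
        rcases Multiset.mem_add.1 ha with h | h
        exacts [hlu a h, hlv a h]
      · rw [Multiset.sum_add, hsu, hsv, ← huv]
  -- BF monoid
  have hBF : IsBFMonoid M := by
    intro x hx
    constructor
    · exact hfac ⌈x⌉₊ x hx (Nat.le_ceil x)
    · refine Set.Finite.subset (Set.finite_Iic ⌊x⌋₊) ?_
      rintro n ⟨l, hl, hsum, hcard⟩
      simp only [Set.mem_Iic]
      apply Nat.le_floor
      have h1 : ∀ a ∈ l, (1:ℚ) ≤ a := by
        intro a ha
        exact le_trans hr.le ((hge a (hl a ha).1).resolve_left (hl a ha).2.1)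
      have h2 := Multiset.card_nsmul_le_sum h1
      rw [hsum, nsmul_eq_mul, mul_one, hcard] at h2
      exact h2
  -- key lemma: den * r^(j+1) - num ∈ M
  have hA : ∀ j : ℕ, (r.den:ℚ) * r ^ (j+1) - (r.num:ℚ) ∈ M := by
    intro j
    induction j with
    | zero => simpa [hqr] using M.zero_mem
    | succ j ih =>
      have key : (r.den:ℚ) * r ^ (j+2) - (r.num:ℚ) =
          ((r.den:ℚ) * r ^ (j+1) - (r.num:ℚ)) +
            ((r.num - r.den).toNat : ℚ) * r ^ (j+1) := by
        have : (((r.num - r.den).toNat : ℤ):ℚ) = ((r.num:ℚ) - (r.den:ℚ)) := by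
          have hle : (r.den:ℤ) ≤ r.num := by exact_mod_cast hpq.le
          rw [Int.toNat_of_nonneg (by omega)]
          push_cast; ring
        push_cast at this ⊢
        rw [this]
        linear_combination (r ^ (j+1)) * hqr
      rw [key]
      refine AddSubmonoid.add_mem _ ih ?_
      rw [← nsmul_eq_mul]
      exact AddSubmonoid.nsmul_mem _ (hgen (j+1) (by omega)) _
  -- the divisibility statement
  have hdiv : ∀ x ∈ M, x ≠ 0 → ∃ m ∈ M, (r.den : ℚ) * x = (r.num : ℚ) + m := by
    have key : ∀ x ∈ M, x = 0 ∨ ∃ m ∈ M, (r.den : ℚ) * x = (r.num : ℚ) + m := by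
      intro x hx
      rw [hM] at hx
      refine AddSubmonoid.closure_induction ?_ ?_ ?_ hx
      · rintro x ⟨n, hn, rfl⟩
        obtain ⟨j, rfl⟩ := Nat.exists_eq_add_of_le hn
        right
        exact ⟨(r.den:ℚ) * r ^ (1+j) - (r.num:ℚ), by rw [add_comm 1 j]; exact hA j, by ring⟩
      · exact Or.inl rfl
      · rintro x y hx' hy' (rfl | ⟨m, hm, he⟩) ihy
        · simpa using ihy
        · right
          have hyM : y ∈ M := by rw [hM]; exact hy'
          refine ⟨m + (r.den:ℚ) * y, ?_, by linarith⟩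
          refine AddSubmonoid.add_mem _ hm ?_
          rw [← nsmul_eq_mul]
          exact AddSubmonoid.nsmul_mem _ hyM _
    intro x hx hx0
    exact (key x hx).resolve_left hx0
  -- num ∈ M
  have hpM : (r.num:ℚ) ∈ M := by
    have h := AddSubmonoid.nsmul_mem M hrM r.den
    rwa [nsmul_eq_mul, hqr] at h
  -- M is closed under multiplication by r
  have hrmul : ∀ x ∈ M, r * x ∈ M := by
    intro x hx
    rw [hM] at hx
    refine AddSubmonoid.closure_induction ?_ ?_ ?_ hx
    · rintro x ⟨n, hn, rfl⟩
      rw [← pow_succ']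
      exact hgen (n+1) (by omega)
    · simpa using M.zero_mem
    · intro x y _ _ ihx ihy
      rw [mul_add]
      exact AddSubmonoid.add_mem _ ihx ihy
  -- for every generator, some multiple of num exceeds it within M
  have hC : ∀ j : ℕ, ∃ k : ℕ, (k:ℚ) * (r.num:ℚ) - r ^ (j+1) ∈ M := by
    intro j
    induction j with
    | zero =>
      refine ⟨1, ?_⟩
      have e : ((1:ℕ):ℚ) * (r.num:ℚ) - r ^ (0+1) = ((r.den - 1 : ℕ):ℚ) * r := by
        push_cast [Nat.cast_sub hd.le]
        linear_combination (-1:ℚ) * hqr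
      rw [e, ← nsmul_eq_mul]
      exact AddSubmonoid.nsmul_mem _ hrM _
    | succ j ih =>
      obtain ⟨k, hk⟩ := ih
      refine ⟨k * r.num.toNat, ?_⟩
      have e : ((k * r.num.toNat : ℕ):ℚ) * (r.num:ℚ) - r ^ (j+2) =
          ((k * r.num.toNat * (r.den - 1) : ℕ):ℚ) * r +
            r * ((k:ℚ) * (r.num:ℚ) - r ^ (j+1)) := by
        push_cast [Nat.cast_sub hd.le, hpn]
        linear_combination (-(k:ℚ) * (r.num:ℚ)) * hqr
      rw [e]
      refine AddSubmonoid.add_mem _ ?_ (hrmul _ hk)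
      rw [← nsmul_eq_mul]
      exact AddSubmonoid.nsmul_mem _ hrM _
  have hB : ∀ x ∈ M, ∃ k : ℕ, (k:ℚ) * (r.num:ℚ) - x ∈ M := by
    intro x hx
    rw [hM] at hx
    refine AddSubmonoid.closure_induction ?_ ?_ ?_ hx
    · rintro x ⟨n, hn, rfl⟩
      obtain ⟨j, rfl⟩ := Nat.exists_eq_add_of_le hn
      rw [add_comm 1 j]
      exact hC j
    · exact ⟨0, by simpa using M.zero_mem⟩
    · rintro x y _ _ ⟨k1, h1⟩ ⟨k2, h2⟩
      refine ⟨k1 + k2, ?_⟩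
      have e : ((k1 + k2 : ℕ):ℚ) * (r.num:ℚ) - (x + y) =
          ((k1:ℚ) * (r.num:ℚ) - x) + ((k2:ℚ) * (r.num:ℚ) - y) := by
        push_cast; ring
      rw [e]
      exact AddSubmonoid.add_mem _ h1 h2
  -- assemble
  refine ⟨hBF, hdiv, ⟨hBF, r.den, {(r.num:ℚ)}, by omega, ?_, ?_⟩, ?_, ?_⟩
  · intro a ha
    simp only [Finset.coe_singleton, Set.mem_singleton_iff] at ha
    subst ha
    exact ⟨hpM, by simpa using hp0.ne'⟩
  · intro x hx hx0
    exact ⟨(r.num:ℚ), Finset.mem_singleton_self _, hdiv x hx hx0⟩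
  · -- M ≠ ⊥
    intro h
    have := hrM
    rw [h, AddSubmonoid.mem_bot] at this
    linarith
  · -- divisor-closed submonoids are trivial
    intro S' hDC
    by_cases hb : S' = ⊥
    · exact Or.inl hb
    right
    have hex : ∃ s ∈ S', s ≠ 0 := by
      by_contra h
      push_neg at h
      exact hb ((AddSubmonoid.eq_bot_iff_forall S').2 h)
    obtain ⟨s, hsS, hs0⟩ := hex
    have hsM : s ∈ M := hDC.1 hsS
    obtain ⟨m, hm, he⟩ := hdiv s hsM hs0
    have hqsS : (r.den:ℚ) * s ∈ S' := by
      rw [← nsmul_eq_mul]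
      exact AddSubmonoid.nsmul_mem _ hsS _
    have hpS : (r.num:ℚ) ∈ S' := hDC.2 _ hpM _ hqsS ⟨m, hm, he⟩
    refine le_antisymm hDC.1 ?_
    intro x hx
    obtain ⟨k, hk⟩ := hB x hx
    have hkpS : (k:ℚ) * (r.num:ℚ) ∈ S' := by
      rw [← nsmul_eq_mul]
      exact AddSubmonoid.nsmul_mem _ hpS _
    exact hDC.2 x hx _ hkpS ⟨_, hk, by ring⟩
end

section
/- Let (aₙ) be a sequence of positive rationals such that the denominators d(aᵢ) (in lowest terms) are pairwise coprime and each d(aₙ) > 1. Then the Puiseux monoid M = ⟨aₙ | n ∈ ℕ⟩ is atomic with set of atoms exactly {aₙ | n ∈ ℕ}, and M is not strongly primary (indeed not finitary). -/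
/-- If a prime `p` divides none of the denominators of a multiset of rationals,
it does not divide the denominator of the sum. -/
lemma aux_den_sum {p : ℕ} (hp : p.Prime) (l : Multiset ℚ)
    (h : ∀ y ∈ l, ¬ p ∣ y.den) : ¬ p ∣ l.sum.den := by
  induction l using Multiset.induction with
  | empty =>
      simp only [Multiset.sum_zero, Rat.den_ofNat, Nat.dvd_one]
      exact hp.ne_one
  | cons x s ih =>
      intro hd
      rw [Multiset.sum_cons] at hd
      have := dvd_trans hd (Rat.add_den_dvd x s.sum)
      rcases hp.dvd_mul.mp this with h1 | h2
      · exact h x (Multiset.mem_cons_self x s) h1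
      · exact ih (fun y hy => h y (Multiset.mem_cons_of_mem hy)) h2

lemma aux_nonneg (a : ℕ → ℚ) (hpos : ∀ n, 0 < a n) {x : ℚ}
    (hx : x ∈ AddSubmonoid.closure (Set.range a)) : 0 ≤ x := by
  obtain ⟨l, hl, rfl⟩ := AddSubmonoid.exists_multiset_of_mem_closure hx
  refine Multiset.sum_nonneg fun y hy => ?_
  obtain ⟨j, rfl⟩ := hl y hy
  exact (hpos j).le

/-- Any multiset representation of `a n` over the generators is `{a n}`. -/
lemma aux_rep (a : ℕ → ℚ) (hpos : ∀ n, 0 < a n) (hden : ∀ n, 1 < (a n).den)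
    (hcop : ∀ i j, i ≠ j → Nat.Coprime (a i).den (a j).den)
    {n : ℕ} {l : Multiset ℚ} (hl : ∀ y ∈ l, y ∈ Set.range a)
    (hs : l.sum = a n) : l = {a n} := by
  set p := (a n).den.minFac with hp
  have hpp : p.Prime := Nat.minFac_prime (hden n).ne'
  have hpd : p ∣ (a n).den := Nat.minFac_dvd _
  -- some element of l has denominator divisible by p
  have hex : ∃ y ∈ l, p ∣ y.den := by
    by_contra hcon
    push_neg at hcon
    exact aux_den_sum hpp l hcon (hs ▸ hpd)
  obtain ⟨y, hyl, hyd⟩ := hex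
  obtain ⟨j, rfl⟩ := hl y hyl
  have hjn : j = n := by
    by_contra hne
    have : p ∣ Nat.gcd (a j).den (a n).den := Nat.dvd_gcd hyd hpd
    rw [hcop j n hne] at this
    exact hpp.ne_one (Nat.dvd_one.mp this)
  subst hjn
  -- the rest sums to zero hence is empty
  have hcons : (a j) ::ₘ l.erase (a j) = l := Multiset.cons_erase hyl
  have hsum0 : (l.erase (a j)).sum = 0 := by
    have := congrArg Multiset.sum hcons
    rw [Multiset.sum_cons, hs] at this
    linarith
  have herase : l.erase (a j) = 0 := by
    by_contra hne
    obtain ⟨z, hz⟩ := Multiset.exists_mem_of_ne_zero hne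
    have hz' : (z ::ₘ (l.erase (a j)).erase z) = l.erase (a j) := Multiset.cons_erase hz
    have h0 : (0:ℚ) ≤ ((l.erase (a j)).erase z).sum := by
      refine Multiset.sum_nonneg fun w hw => ?_
      obtain ⟨i, rfl⟩ := hl w (Multiset.mem_of_mem_erase (Multiset.mem_of_mem_erase hw))
      exact (hpos i).le
    obtain ⟨i, rfl⟩ := hl z (Multiset.mem_of_mem_erase hz)
    have := congrArg Multiset.sum hz'
    rw [Multiset.sum_cons, hsum0] at this
    have := hpos i
    linarith
  rw [← hcons, herase]
  rfl

/-- If `(aₙ)` is a sequence of positive rationals with pairwise coprime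
denominators, all exceeding `1`, then `M = ⟨aₙ | n ∈ ℕ⟩` is atomic with set of
atoms exactly `{aₙ | n ∈ ℕ}`, but `M` is not finitary (hence not strongly
primary). -/
theorem stmt13 (a : ℕ → ℚ) (hpos : ∀ n, 0 < a n)
    (hden : ∀ n, 1 < (a n).den)
    (hcop : ∀ i j, i ≠ j → Nat.Coprime (a i).den (a j).den)
    (M : AddSubmonoid ℚ) (hM : M = AddSubmonoid.closure (Set.range a)) :
    IsAtomicMonoid M ∧ {q : ℚ | IsAtomOf M q} = Set.range a ∧
      ¬ IsFinitaryMonoid M := by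
  subst hM
  set M := AddSubmonoid.closure (Set.range a) with hMdef
  -- every generator is an atom
  have hatom : ∀ k, IsAtomOf M (a k) := by
    intro k
    refine ⟨AddSubmonoid.subset_closure ⟨k, rfl⟩, (hpos k).ne', ?_⟩
    intro u v hu hv heq
    obtain ⟨lu, hlu, hsu⟩ := AddSubmonoid.exists_multiset_of_mem_closure hu
    obtain ⟨lv, hlv, hsv⟩ := AddSubmonoid.exists_multiset_of_mem_closure hv
    have hmem : ∀ y ∈ lu + lv, y ∈ Set.range a := by
      intro y hy
      rcases Multiset.mem_add.mp hy with h | h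
      · exact hlu y h
      · exact hlv y h
    have hsum : (lu + lv).sum = a k := by
      rw [Multiset.sum_add, hsu, hsv, ← heq]
    have hrep := aux_rep a hpos hden hcop hmem hsum
    have hcard := congrArg Multiset.card hrep
    rw [Multiset.card_add, Multiset.card_singleton] at hcard
    rcases Nat.add_eq_one_iff.mp hcard with ⟨h1, _⟩ | ⟨_, h2⟩
    · left; rw [← hsu, Multiset.card_eq_zero.mp h1, Multiset.sum_zero]
    · right; rw [← hsv, Multiset.card_eq_zero.mp h2, Multiset.sum_zero]
  refine ⟨?_, ?_, ?_⟩
  · -- atomic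
    intro x hx
    obtain ⟨l, hl, hsum⟩ := AddSubmonoid.exists_multiset_of_mem_closure hx
    refine ⟨l, fun y hy => ?_, hsum⟩
    obtain ⟨j, rfl⟩ := hl y hy
    exact hatom j
  · -- atoms are exactly the generators
    ext q
    simp only [Set.mem_setOf_eq]
    constructor
    · rintro ⟨hqM, hq0, hsplit⟩
      obtain ⟨l, hl, hsum⟩ := AddSubmonoid.exists_multiset_of_mem_closure hqM
      have hlne : l ≠ 0 := by
        rintro rfl
        exact hq0 (by simpa using hsum.symm)
      obtain ⟨y, hy⟩ := Multiset.exists_mem_of_ne_zero hlne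
      have hyM : y ∈ M := AddSubmonoid.subset_closure (hl y hy)
      have hrM : (l.erase y).sum ∈ M := by
        refine AddSubmonoid.multiset_sum_mem _ _ fun z hz => ?_
        exact AddSubmonoid.subset_closure (hl z (Multiset.mem_of_mem_erase hz))
      have hqe : q = y + (l.erase y).sum := by
        rw [← hsum, ← Multiset.sum_cons, Multiset.cons_erase hy]
      rcases hsplit y _ hyM hrM hqe with h | h
      · obtain ⟨j, rfl⟩ := hl y hy
        exact absurd h (hpos j).ne'
      · rw [hqe, h, add_zero]
        exact hl y hy
    · rintro ⟨k, rfl⟩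
      exact hatom k
  · -- not finitary
    rintro ⟨-, n, S, hn, hS, h⟩
    set B : ℕ := max n (S.sup Rat.den) with hB
    have hinj : Function.Injective (fun k => (a k).den.minFac) := by
      intro i j hij
      by_contra hne
      have h1 : (a i).den.minFac ∣ (a i).den := Nat.minFac_dvd _
      have h2 : (a i).den.minFac ∣ (a j).den := by
        simp only at hij
        rw [hij]; exact Nat.minFac_dvd _
      have hg : (a i).den.minFac ∣ Nat.gcd (a i).den (a j).den := Nat.dvd_gcd h1 h2
      rw [hcop i j hne] at hg
      exact (Nat.minFac_prime (hden i).ne').ne_one (Nat.dvd_one.mp hg)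
    have hfin : {k : ℕ | (a k).den.minFac ≤ B}.Finite := by
      have : {k : ℕ | (a k).den.minFac ≤ B} = (fun k => (a k).den.minFac) ⁻¹' (Set.Iic B) := rfl
      rw [this]
      exact Set.Finite.preimage hinj.injOn (Set.finite_Iic B)
    obtain ⟨k, hk⟩ := hfin.infinite_compl.nonempty
    simp only [Set.mem_compl_iff, Set.mem_setOf_eq, not_le] at hk
    set p := (a k).den.minFac with hpdef
    have hpp : p.Prime := Nat.minFac_prime (hden k).ne'
    have hpd : p ∣ (a k).den := Nat.minFac_dvd _
    -- apply finitariness to a k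
    obtain ⟨s, hsS, m, hmM, heq⟩ := h (a k) (AddSubmonoid.subset_closure ⟨k, rfl⟩) (hpos k).ne'
    obtain ⟨hsM, hs0⟩ : s ∈ M ∧ s ≠ 0 := by
      have := hS hsS; exact ⟨this.1, this.2⟩
    have hspos : 0 < s := lt_of_le_of_ne (aux_nonneg a hpos hsM) (Ne.symm hs0)
    obtain ⟨l, hl, hlsum⟩ := AddSubmonoid.exists_multiset_of_mem_closure hmM
    set c := l.count (a k) with hc
    set t := (l.filter (fun y => ¬ y = a k)).sum with ht
    have hmsplit : m = (c : ℚ) * a k + t := by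
      have := Multiset.filter_add_not (fun y => y = a k) l
      have hsum2 := congrArg Multiset.sum this
      rw [Multiset.sum_add] at hsum2
      rw [← hlsum, ← hsum2, Multiset.filter_eq', Multiset.sum_replicate, nsmul_eq_mul]
    -- t has denominator prime to p, t ≥ 0
    have htne : ¬ p ∣ t.den := by
      refine aux_den_sum hpp _ fun y hy => ?_
      have hyl := Multiset.mem_filter.mp hy
      obtain ⟨j, rfl⟩ := hl y hyl.1
      have hjk : j ≠ k := by
        rintro rfl
        exact hyl.2 rfl
      intro hdvd
      have hg : p ∣ Nat.gcd (a j).den (a k).den := Nat.dvd_gcd hdvd hpd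
      rw [hcop j k hjk] at hg
      exact hpp.ne_one (Nat.dvd_one.mp hg)
    have htnn : 0 ≤ t := by
      refine Multiset.sum_nonneg fun y hy => ?_
      obtain ⟨j, rfl⟩ := hl y (Multiset.mem_filter.mp hy).1
      exact (hpos j).le
    have hsne : ¬ p ∣ s.den := by
      intro hdvd
      have h1 : p ≤ s.den := Nat.le_of_dvd s.pos hdvd
      have h2 : s.den ≤ B := le_max_of_le_right (Finset.le_sup hsS)
      omega
    set r := s + t with hr
    have hrne : ¬ p ∣ r.den := by
      intro hdvd
      rcases hpp.dvd_mul.mp (dvd_trans hdvd (Rat.add_den_dvd s t)) with h1 | h2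
      · exact hsne h1
      · exact htne h2
    have hrpos : 0 < r := lt_of_lt_of_le hspos (le_add_of_nonneg_right htnn)
    have heqr : ((n : ℚ) - c) * a k = r := by
      rw [hmsplit] at heq
      rw [hr]; linarith
    have hcn : c < n := by
      by_contra hge
      push_neg at hge
      have h1 : ((n : ℚ) - c) ≤ 0 := by
        have : (c : ℚ) ≥ n := by exact_mod_cast hge
        linarith
      have h2 : ((n : ℚ) - c) * a k ≤ 0 := mul_nonpos_of_nonpos_of_nonneg h1 (hpos k).le
      linarith [heqr ▸ h2, hrpos]
    set N := n - c with hN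
    have hNpos : 0 < N := Nat.sub_pos_of_lt hcn
    have hNcast : ((N : ℚ)) = (n : ℚ) - c := by
      rw [hN]; push_cast [Nat.cast_sub hcn.le]; ring
    have heqN : (N : ℚ) * a k = r := by rw [hNcast]; exact heqr
    -- cross-multiply to integers
    have hint : (N : ℤ) * (a k).num * (r.den : ℤ) = r.num * ((a k).den : ℤ) := by
      have e1 : ((a k).num : ℚ) = a k * ((a k).den : ℚ) := (Rat.mul_den_eq_num (a k)).symm
      have e2 : ((r.num : ℚ)) = r * ((r.den : ℚ)) := (Rat.mul_den_eq_num r).symm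
      have : ((N : ℚ)) * ((a k).num : ℚ) * ((r.den : ℚ)) = ((r.num : ℚ)) * (((a k).den : ℚ)) := by
        rw [e1, e2]
        linear_combination (((a k).den : ℚ) * ((r.den : ℚ))) * heqN
      exact_mod_cast this
    have hdvd1 : (p : ℤ) ∣ r.num * ((a k).den : ℤ) :=
      Dvd.dvd.mul_left (Int.natCast_dvd_natCast.mpr hpd) r.num
    rw [← hint] at hdvd1
    have hpZ : Prime (p : ℤ) := Nat.prime_iff_prime_int.mp hpp
    rcases hpZ.dvd_mul.mp hdvd1 with h12 | h3
    · rcases hpZ.dvd_mul.mp h12 with h1 | h2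
      · -- p ∣ N, but 0 < N ≤ n < p
        have : p ∣ N := Int.natCast_dvd_natCast.mp h1
        have hNle : N ≤ n := Nat.sub_le _ _
        have := Nat.le_of_dvd hNpos this
        have hnB : n ≤ B := le_max_left _ _
        omega
      · -- p ∣ num (a k), contradicting reducedness
        have hnum : p ∣ (a k).num.natAbs := Int.natCast_dvd.mp h2
        have hg : p ∣ Nat.gcd (a k).num.natAbs (a k).den := Nat.dvd_gcd hnum hpd
        rw [(a k).reduced] at hg
        exact hpp.ne_one (Nat.dvd_one.mp hg)
    · exact hrne (Int.natCast_dvd_natCast.mp h3)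
end

section
/- A Puiseux monoid is a Krull monoid if and only if it is generated by a single element (equivalently, it is trivial or isomorphic to ℕ₀). -/
/-- A (reduced) additive monoid `M` is Krull if it admits a divisor homomorphism
`φ` into a free abelian monoid `ι →₀ ℕ` such that every element of the free
abelian monoid is the gcd of finitely many elements of `φ(M)`. -/
def IsKrullMonoid (M : AddSubmonoid ℚ) : Prop :=
  ∃ (ι : Type) (φ : ↥M →+ (ι →₀ ℕ)),
    (∀ a b : ↥M, (∃ e : ι →₀ ℕ, φ b = φ a + e) → ∃ c : ↥M, b = a + c) ∧
    (∀ d : ι →₀ ℕ, ∃ (n : ℕ) (f : Fin (n + 1) → ↥M), ∀ i : ι,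
      d i = Finset.univ.inf' Finset.univ_nonempty fun k => φ (f k) i)

section Aux

variable {ι : Type}

private lemma aux_no_anti (g : ℕ → ℕ) (h : ∀ n, g (n + 1) < g n) : False := by
  have key : ∀ n, g n + n ≤ g 0 := by
    intro n
    induction n with
    | zero => omega
    | succ k ih => have := h k; omega
  have := key (g 0 + 1); omega

private def deg (d : ι →₀ ℕ) : ℕ := d.sum fun _ n => n

private lemma deg_add (d e : ι →₀ ℕ) : deg (d + e) = deg d + deg e := by
  unfold deg
  exact Finsupp.sum_add_index' (fun _ => rfl) (fun _ _ _ => rfl)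

private lemma deg_eq_zero {d : ι →₀ ℕ} (h : deg d = 0) : d = 0 := by
  unfold deg Finsupp.sum at h
  ext i
  by_cases hi : i ∈ d.support
  · simpa using Finset.sum_eq_zero_iff.mp h i hi
  · simpa using Finsupp.notMem_support_iff.mp hi

private lemma aux_inj {M : AddSubmonoid ℚ} (hM : IsPuiseux M)
    (φ : ↥M →+ (ι →₀ ℕ))
    (hdiv : ∀ a b : ↥M, (∃ e : ι →₀ ℕ, φ b = φ a + e) → ∃ c : ↥M, b = a + c) :
    Function.Injective φ := by
  intro a b h
  obtain ⟨c, hc⟩ := hdiv a b ⟨0, by rw [h, add_zero]⟩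
  obtain ⟨c', hc'⟩ := hdiv b a ⟨0, by rw [h, add_zero]⟩
  have h1 : (b : ℚ) = (a : ℚ) + (c : ℚ) := congrArg Subtype.val hc
  have h2 : (a : ℚ) = (b : ℚ) + (c' : ℚ) := congrArg Subtype.val hc'
  have hc0 : (0:ℚ) ≤ (c : ℚ) := hM _ c.2
  have hc0' : (0:ℚ) ≤ (c' : ℚ) := hM _ c'.2
  exact Subtype.ext (by linarith)

/-- Key lemma: in a Krull Puiseux monoid, divisibility coincides with ≤. -/
private lemma aux_sub_mem {M : AddSubmonoid ℚ} (hM : IsPuiseux M)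
    (φ : ↥M →+ (ι →₀ ℕ))
    (hdiv : ∀ a b : ↥M, (∃ e : ι →₀ ℕ, φ b = φ a + e) → ∃ c : ↥M, b = a + c)
    (a b : ↥M) (hab : (a:ℚ) ≤ (b:ℚ)) : ∃ c : ↥M, b = a + c := by
  have key : ∀ i, φ a i ≤ φ b i := by
    intro i
    rcases eq_or_lt_of_le hab with heq | hlt
    · rw [Subtype.ext heq]
    · rcases eq_or_lt_of_le (hM _ a.2) with ha0 | hapos
      · have : a = 0 := Subtype.ext ha0.symm
        rw [this]
        simp
      · set x : ℚ := (b:ℚ) - (a:ℚ) with hx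
        have hxpos : 0 < x := by rw [hx]; linarith
        set r : ℚ := x / (a:ℚ) with hr
        have hrpos : 0 < r := div_pos hxpos hapos
        have hxa : x = r * (a:ℚ) := by
          rw [hr]; field_simp
        have hnum : ((r.num.toNat : ℤ) : ℚ) = (r.num : ℚ) := by
          exact_mod_cast Int.toNat_of_nonneg (Rat.num_nonneg.mpr hrpos.le)
        have hmx : ((r.den : ℕ) : ℚ) * x = ((r.num.toNat : ℕ) : ℚ) * (a:ℚ) := by
          rw [hxa]
          have hden : ((r.den : ℕ) : ℚ) * r = (r.num : ℚ) := by
            rw [mul_comm]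
            exact_mod_cast Rat.mul_den_eq_num r
          push_cast at hnum ⊢
          rw [← mul_assoc, hden, hnum]
        -- m • b = n • a + m • a  inside M
        set m : ℕ := r.den with hm
        set n : ℕ := r.num.toNat with hn
        have hmpos : 0 < m := r.pos
        have hsub : m • b = n • a + m • a := by
          apply Subtype.ext
          push_cast [AddSubmonoidClass.coe_nsmul, nsmul_eq_mul]
          have hxdef : (m : ℚ) * ((b:ℚ) - (a:ℚ)) = (n : ℚ) * (a:ℚ) := by
            rw [← hx]; exact hmx
          linarith [hxdef]
        have hφ := congrArg (fun d => d i) (congrArg φ hsub)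
        simp only [map_nsmul, map_add, Finsupp.add_apply, Finsupp.smul_apply,
          smul_eq_mul] at hφ
        -- hφ : m * φ b i = n * φ a i + m * φ a i
        have hle : m * (φ a) i ≤ m * (φ b) i := by omega
        exact Nat.le_of_mul_le_mul_left hle hmpos
  refine hdiv a b ⟨φ b - φ a, ?_⟩
  ext i
  rw [Finsupp.add_apply, Finsupp.tsub_apply]
  have := key i
  omega

end Aux

/-- A Puiseux monoid is a Krull monoid iff it is generated by a single element. -/
theorem stmt16 (M : AddSubmonoid ℚ) (hM : IsPuiseux M) :
    IsKrullMonoid M ↔ ∃ q : ℚ, M = AddSubmonoid.closure {q} := by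
  constructor
  · rintro ⟨ι, φ, hdiv, hgcd⟩
    by_cases htriv : ∀ x ∈ M, x = (0:ℚ)
    · refine ⟨0, le_antisymm ?_ (AddSubmonoid.closure_le.mpr ?_)⟩
      · intro x hx
        rw [htriv x hx]
        exact zero_mem _
      · simpa using zero_mem M
    · push_neg at htriv
      obtain ⟨a0, ha0M, ha0⟩ := htriv
      have ha0pos : 0 < a0 := lt_of_le_of_ne (hM a0 ha0M) (Ne.symm ha0)
      by_cases hmin : ∃ m ∈ M, 0 < m ∧ ∀ y ∈ M, 0 < y → m ≤ y
      · obtain ⟨m, hmM, hmpos, hmle⟩ := hmin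
        refine ⟨m, le_antisymm ?_ (AddSubmonoid.closure_le.mpr (by simpa using hmM))⟩
        intro x hx
        rw [AddSubmonoid.mem_closure_singleton]
        have hx0 : 0 ≤ x := hM x hx
        set k : ℕ := ⌊x / m⌋.toNat with hk
        have hkfl : ((k : ℤ) : ℚ) = (⌊x / m⌋ : ℚ) := by
          have : (0 : ℤ) ≤ ⌊x / m⌋ := Int.le_floor.mpr (by push_cast; positivity)
          exact_mod_cast Int.toNat_of_nonneg this
        have h1 : (k:ℚ) * m ≤ x := by
          have hfl := Int.floor_le (x / m)
          rw [← hkfl] at hfl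
          have := (le_div_iff₀ hmpos).mp (by exact_mod_cast hfl)
          linarith
        have h2 : x - (k:ℚ) * m < m := by
          have hfl := Int.lt_floor_add_one (x / m)
          rw [← hkfl] at hfl
          have := (div_lt_iff₀ hmpos).mp (by exact_mod_cast hfl)
          push_cast at this ⊢
          linarith
        have hkm : (k:ℚ) * m ∈ M := by
          have := AddSubmonoid.nsmul_mem (S := M) hmM k
          simpa [nsmul_eq_mul] using this
        obtain ⟨c, hc⟩ := aux_sub_mem hM φ hdiv ⟨(k:ℚ)*m, hkm⟩ ⟨x, hx⟩ h1
        have hcq : x = (k:ℚ)*m + (c:ℚ) := congrArg Subtype.val hc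
        have hc0 : (c:ℚ) = 0 := by
          by_contra hne
          have hcpos : 0 < (c:ℚ) := lt_of_le_of_ne (hM _ c.2) (Ne.symm hne)
          have := hmle _ c.2 hcpos
          linarith
        exact ⟨k, by rw [nsmul_eq_mul]; linarith⟩
      · exfalso
        push_neg at hmin
        have step : ∀ p : {x : ↥M // 0 < (x:ℚ)},
            ∃ q : {x : ↥M // 0 < (x:ℚ)}, ((q.1 : ↥M) : ℚ) < ((p.1 : ↥M) : ℚ) := by
          rintro ⟨⟨p, hpM⟩, hp⟩
          obtain ⟨y, hyM, hy, hylt⟩ := hmin p hpM hp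
          exact ⟨⟨⟨y, hyM⟩, hy⟩, hylt⟩
        let f : ℕ → {x : ↥M // 0 < (x:ℚ)} := fun n =>
          Nat.rec ⟨⟨a0, ha0M⟩, ha0pos⟩ (fun _ p => Classical.choose (step p)) n
        have hf : ∀ n, (((f (n+1)).1 : ↥M) : ℚ) < ((f n).1 : ℚ) := fun n =>
          Classical.choose_spec (step (f n))
        have hdec : ∀ n, deg (φ (f (n+1)).1) < deg (φ (f n).1) := by
          intro n
          obtain ⟨c, hc⟩ := aux_sub_mem hM φ hdiv (f (n+1)).1 (f n).1 (hf n).le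
          have hcne : c ≠ 0 := by
            intro h0
            rw [h0, add_zero] at hc
            have := congrArg Subtype.val hc
            have hlt := hf n
            rw [this] at hlt
            exact lt_irrefl _ hlt
          have hφc : φ c ≠ 0 := fun h =>
            hcne (aux_inj hM φ hdiv (by rw [h, map_zero]))
          have hdeg : deg (φ (f n).1) = deg (φ (f (n+1)).1) + deg (φ c) := by
            rw [hc, map_add, deg_add]
          have hdc : deg (φ c) ≠ 0 := fun h => hφc (deg_eq_zero h)
          omega
        exact aux_no_anti (fun n => deg (φ (f n).1)) hdec
  · rintro ⟨q, rfl⟩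
    have hqN : q ∈ AddSubmonoid.closure ({q} : Set ℚ) :=
      AddSubmonoid.subset_closure (Set.mem_singleton q)
    have hq0 : 0 ≤ q := hM q hqN
    rcases eq_or_lt_of_le hq0 with hq | hq
    · -- q = 0 : the monoid is trivial
      have hz : ∀ x : ↥(AddSubmonoid.closure ({q} : Set ℚ)), x = 0 := by
        rintro ⟨x, hx⟩
        rw [AddSubmonoid.mem_closure_singleton] at hx
        obtain ⟨n, rfl⟩ := hx
        apply Subtype.ext
        simp [← hq]
      refine ⟨Empty, 0, ?_, ?_⟩
      · intro a b _
        exact ⟨0, by rw [hz a, hz b, add_zero]⟩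
      · intro d
        exact ⟨0, fun _ => 0, fun i => i.elim⟩
    · -- 0 < q : the monoid is a copy of ℕ
      have hrep : ∀ x : ↥(AddSubmonoid.closure ({q} : Set ℚ)), ∃ n : ℕ, (x:ℚ) = n * q := by
        rintro ⟨x, hx⟩
        rw [AddSubmonoid.mem_closure_singleton] at hx
        obtain ⟨n, hn⟩ := hx
        refine ⟨n, ?_⟩
        show x = (n : ℚ) * q
        rw [← hn, nsmul_eq_mul]
      set N := AddSubmonoid.closure ({q} : Set ℚ) with hN
      let natOf : ↥N → ℕ := fun x => Classical.choose (hrep x)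
      have hnat : ∀ x : ↥N, (x:ℚ) = natOf x * q := fun x => Classical.choose_spec (hrep x)
      have huniq : ∀ (x : ↥N) (n : ℕ), (x:ℚ) = n * q → natOf x = n := by
        intro x n h
        have h1 := hnat x
        have h2 : (natOf x : ℚ) * q = (n : ℚ) * q := by rw [← h1, h]
        have h3 : (natOf x : ℚ) = (n : ℚ) := mul_right_cancel₀ (ne_of_gt hq) h2
        exact_mod_cast h3
      have hmem : ∀ n : ℕ, (n : ℚ) * q ∈ N := by
        intro n
        have := AddSubmonoid.nsmul_mem (S := N) hqN n
        simpa [nsmul_eq_mul] using this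
      refine ⟨Unit,
        { toFun := fun x => Finsupp.single () (natOf x)
          map_zero' := by
            show Finsupp.single () (natOf 0) = 0
            rw [huniq 0 0 (by simp), Finsupp.single_zero]
          map_add' := by
            intro a b
            show Finsupp.single () (natOf (a + b)) =
              Finsupp.single () (natOf a) + Finsupp.single () (natOf b)
            rw [huniq (a + b) (natOf a + natOf b) (by push_cast [hnat a, hnat b]; ring),
              Finsupp.single_add] }, ?_, ?_⟩
      · rintro a b ⟨e, he⟩
        simp only [AddMonoidHom.coe_mk, ZeroHom.coe_mk] at he
        have he' : natOf b = natOf a + e () := by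
          have := congrArg (fun d : Unit →₀ ℕ => d ()) he
          simpa using this
        refine ⟨⟨(e () : ℚ) * q, by exact_mod_cast hmem (e ())⟩, ?_⟩
        apply Subtype.ext
        push_cast
        rw [hnat b, hnat a, he']
        push_cast
        ring
      · intro d
        refine ⟨0, fun _ => ⟨(d () : ℚ) * q, by exact_mod_cast hmem (d ())⟩, ?_⟩
        intro i
        cases i
        rw [Finset.inf'_const]
        simp only [AddMonoidHom.coe_mk, ZeroHom.coe_mk]
        rw [huniq _ (d ()) rfl]
        simp
end

section
/- A nontrivial Puiseux monoid is a C-monoid if and only if it is isomorphic to a numerical monoid. -/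
/-- `M` is a C-monoid: it embeds into a (reduced) factorial monoid, i.e. a free
abelian monoid `ι →₀ ℕ`, in such a way that the reduced class semigroup is
finite. Two elements `x, y` of the factorial monoid are `M`-equivalent iff
`{d | x + d ∈ ψ(M)} = {d | y + d ∈ ψ(M)}`, so finiteness of the reduced class
semigroup amounts to finiteness of the family of such sets. -/
def IsCMonoid (M : AddSubmonoid ℚ) : Prop :=
  ∃ (ι : Type) (ψ : ↥M →+ (ι →₀ ℕ)), Function.Injective ψ ∧
    Set.Finite {s : Set (ι →₀ ℕ) |
      ∃ x : ι →₀ ℕ, s = {d : ι →₀ ℕ | x + d ∈ Set.range ψ}}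

/-- Lemma A: a C-monoid Puiseux monoid has "bounded denominators". -/
lemma lemA (M : AddSubmonoid ℚ) (hM : IsPuiseux M) (hMnt : M ≠ ⊥)
    (h : IsCMonoid M) : ∃ q : ℚ, 0 < q ∧ ∀ m ∈ M, ∃ k : ℕ, m = (k : ℚ) * q := by
  obtain ⟨ι, ψ, hinj, -⟩ := h
  -- a nonzero element of M
  have hex : ∃ x ∈ M, x ≠ 0 := by
    by_contra hc
    push_neg at hc
    exact hMnt ((AddSubmonoid.eq_bot_iff_forall M).mpr hc)
  obtain ⟨m₀, hm₀M, hm₀⟩ := hex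
  have hm₀pos : 0 < m₀ := lt_of_le_of_ne (hM m₀ hm₀M) (Ne.symm hm₀)
  set x₀ : ↥M := ⟨m₀, hm₀M⟩ with hx₀
  have hx₀ne : x₀ ≠ 0 := by
    intro hh
    exact hm₀ (congrArg Subtype.val hh)
  have hψx₀ : ψ x₀ ≠ 0 := by
    intro hh
    exact hx₀ne (hinj (by rw [hh, map_zero]))
  -- pick a coordinate where ψ x₀ is nonzero
  obtain ⟨i, hi⟩ : ∃ i, ψ x₀ i ≠ 0 := by
    by_contra hc
    push_neg at hc
    exact hψx₀ (Finsupp.ext hc)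
  set c : ℕ := ψ x₀ i with hc
  have hcpos : 0 < c := Nat.pos_of_ne_zero hi
  refine ⟨m₀ / c, by positivity, ?_⟩
  intro m hm
  set r : ℚ := m / m₀ with hr
  have hrnonneg : 0 ≤ r := div_nonneg (hM m hm) (le_of_lt hm₀pos)
  have hnum : (r.num.toNat : ℤ) = r.num := Int.toNat_of_nonneg (Rat.num_nonneg.mpr hrnonneg)
  -- the basic rational relation: r.den * m = r.num * m₀
  have hnumQ : ((r.num.toNat : ℕ) : ℚ) = (r.num : ℚ) := by exact_mod_cast hnum
  have hkey : (r.den : ℚ) * m = (r.num.toNat : ℚ) * m₀ := by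
    have h1 : r * m₀ = m := div_mul_cancel₀ m (ne_of_gt hm₀pos)
    have h2 : ((r.num : ℚ) / r.den) * m₀ = m := by rw [Rat.num_div_den]; exact h1
    have hden : (r.den : ℚ) ≠ 0 := by exact_mod_cast r.den_nz
    field_simp at h2
    rw [hnumQ]
    linarith [h2]
  -- lift to the monoid
  have hmem : ∀ (n : ℕ) (y : ↥M), n • y = (⟨n • (y : ℚ), AddSubmonoid.nsmul_mem M y.2 n⟩ : ↥M) := by
    intro n y; rfl
  have hrel : r.den • (⟨m, hm⟩ : ↥M) = r.num.toNat • x₀ := by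
    apply Subtype.ext
    show r.den • m = r.num.toNat • m₀
    rw [nsmul_eq_mul, nsmul_eq_mul]
    exact hkey
  -- push through the coordinate i of ψ
  have hg : r.den * (((Finsupp.applyAddHom i).comp ψ) ⟨m, hm⟩) = r.num.toNat * c := by
    have := congrArg ((Finsupp.applyAddHom i).comp ψ) hrel
    rw [map_nsmul, map_nsmul] at this
    simpa [smul_eq_mul] using this
  have hdvd : r.den ∣ c := by
    have h1 : r.den ∣ r.num.toNat * c := ⟨_, hg.symm⟩
    have hcop : (r.num.toNat).Coprime r.den := by
      have h2 := r.reduced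
      have h3 : r.num.natAbs = r.num.toNat := by
        have := Rat.num_nonneg.mpr hrnonneg; omega
      rwa [h3] at h2
    exact (Nat.Coprime.dvd_of_dvd_mul_left (Nat.Coprime.symm hcop) h1)
  obtain ⟨e, he⟩ := hdvd
  have hepos : 0 < e := by
    rcases Nat.eq_zero_or_pos e with h0 | h0
    · exfalso; rw [h0, Nat.mul_zero] at he; exact hi he
    · exact h0
  refine ⟨r.num.toNat * e, ?_⟩
  have hcne : ((c : ℕ) : ℚ) ≠ 0 := by exact_mod_cast hcpos.ne'
  have hce : ((c : ℕ) : ℚ) = (r.den : ℚ) * e := by exact_mod_cast congrArg (Nat.cast : ℕ → ℚ) he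
  rw [mul_div_assoc', eq_div_iff hcne, hce]
  push_cast
  linear_combination (e : ℚ) * hkey

/-- Lemma C: every nontrivial submonoid of ℕ is isomorphic to a cofinite one. -/
lemma lemC (S : AddSubmonoid ℕ) (hS : ∃ s ∈ S, s ≠ 0) :
    ∃ N : AddSubmonoid ℕ, (Set.univ \ (N : Set ℕ)).Finite ∧ Nonempty (↥S ≃+ ↥N) := by
  obtain ⟨s₀, hs₀S, hs₀⟩ := hS
  -- the difference group of S inside ℤ
  set G : AddSubgroup ℤ :=
    { carrier := {z | ∃ a ∈ S, ∃ b ∈ S, (a : ℤ) - b = z}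
      add_mem' := by
        rintro x y ⟨a, ha, b, hb, rfl⟩ ⟨a', ha', b', hb', rfl⟩
        exact ⟨a + a', S.add_mem ha ha', b + b', S.add_mem hb hb', by push_cast; ring⟩
      zero_mem' := ⟨0, S.zero_mem, 0, S.zero_mem, by ring⟩
      neg_mem' := by
        rintro x ⟨a, ha, b, hb, rfl⟩
        exact ⟨b, hb, a, ha, by ring⟩ } with hGdef
  obtain ⟨g, hG⟩ := Int.subgroup_cyclic G
  set d : ℕ := g.natAbs with hd
  have hmemS : ∀ s ∈ S, (s : ℤ) ∈ G := fun s hs => ⟨s, hs, 0, S.zero_mem, by ring⟩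
  have hgdvd : ∀ z ∈ G, g ∣ z := by
    intro z hz
    rw [hG, AddSubgroup.mem_closure_singleton] at hz
    obtain ⟨n, rfl⟩ := hz
    exact Dvd.intro_left n rfl
  have hdne : d ≠ 0 := by
    intro h0
    have hg0 : g = 0 := Int.natAbs_eq_zero.mp h0
    have := hgdvd _ (hmemS s₀ hs₀S)
    rw [hg0, zero_dvd_iff] at this
    exact hs₀ (by exact_mod_cast this)
  have hdpos : 0 < d := Nat.pos_of_ne_zero hdne
  have hdvd : ∀ s ∈ S, d ∣ s := by
    intro s hs
    have := hgdvd _ (hmemS s hs)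
    have h2 : (d : ℤ) ∣ (s : ℤ) := Int.natAbs_dvd.mpr this
    exact_mod_cast h2
  -- d itself is a difference of two elements of S
  have hdG : (d : ℤ) ∈ G := by
    have hgG : g ∈ G := by rw [hG]; exact AddSubgroup.subset_closure rfl
    rcases Int.natAbs_eq g with h | h
    · rw [hd]; rw [h] at hgG; exact hgG
    · have h2 : -g ∈ G := G.neg_mem hgG
      rw [hd]
      have h3 : -g = (g.natAbs : ℤ) := by omega
      rwa [h3] at h2
  obtain ⟨a, haS, b, hbS, hab⟩ := hdG
  -- N = S / d
  set N : AddSubmonoid ℕ := S.comap (AddMonoidHom.mulRight d) with hN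
  have hmemN : ∀ n : ℕ, n ∈ N ↔ n * d ∈ S := fun n => Iff.rfl
  -- the isomorphism S ≃+ N
  have hdivmem : ∀ s ∈ S, s / d ∈ N := by
    intro s hs
    rw [hmemN, Nat.div_mul_cancel (hdvd s hs)]
    exact hs
  have hiso : Nonempty (↥S ≃+ ↥N) := by
    refine ⟨{ toFun := fun x => ⟨(x : ℕ) / d, hdivmem _ x.2⟩
              invFun := fun y => ⟨(y : ℕ) * d, y.2⟩
              left_inv := ?_, right_inv := ?_, map_add' := ?_ }⟩
    · rintro ⟨s, hs⟩
      exact Subtype.ext (Nat.div_mul_cancel (hdvd s hs))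
    · rintro ⟨n, hn⟩
      exact Subtype.ext (Nat.mul_div_cancel n hdpos)
    · rintro ⟨s, hs⟩ ⟨t, ht⟩
      apply Subtype.ext
      obtain ⟨u, hu⟩ := hdvd s hs
      obtain ⟨v, hv⟩ := hdvd t ht
      show (s + t) / d = s / d + t / d
      subst hu hv
      rw [← Nat.mul_add, Nat.mul_div_cancel_left _ hdpos, Nat.mul_div_cancel_left _ hdpos,
        Nat.mul_div_cancel_left _ hdpos]
  -- N is cofinite: it contains t := b/d and t+1
  have habn : a = b + d := by omega
  set t : ℕ := b / d with ht
  have htN : t ∈ N := hdivmem b hbS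
  have ht1N : t + 1 ∈ N := by
    rw [hmemN, Nat.add_mul, one_mul, Nat.div_mul_cancel (hdvd b hbS), ← habn]
    exact haS
  have hlarge : ∀ n : ℕ, t * t ≤ n → n ∈ N := by
    intro n hn
    rcases Nat.eq_zero_or_pos t with ht0 | htpos
    · have : n • (t + 1) ∈ N := N.nsmul_mem ht1N n
      simpa [ht0, smul_eq_mul] using this
    · set r : ℕ := n % t with hrdef
      set q : ℕ := n / t with hqdef
      have hrt : r < t := Nat.mod_lt _ htpos
      have hqt : t ≤ q := Nat.le_div_iff_mul_le htpos |>.mpr (by nlinarith)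
      have hdm : t * q + r = n := Nat.div_add_mod n t
      have hrq : r ≤ q := le_of_lt (lt_of_lt_of_le hrt hqt)
      have hsplit : n = r * (t + 1) + (q - r) * t := by
        have h1 : (q - r) * t = q * t - r * t := Nat.sub_mul q r t
        have h2 : r * t ≤ q * t := Nat.mul_le_mul_right t hrq
        have h3 : r * (t + 1) = r * t + r := by ring
        have h4 : q * t = t * q := Nat.mul_comm q t
        omega
      rw [hsplit]
      refine N.add_mem ?_ ?_
      · have := N.nsmul_mem ht1N r; simpa [smul_eq_mul] using this
      · have := N.nsmul_mem htN (q - r); simpa [smul_eq_mul] using this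
  refine ⟨N, ?_, hiso⟩
  apply Set.Finite.subset (Set.finite_Iio (t * t))
  intro n hn
  simp only [Set.mem_diff, Set.mem_univ, true_and] at hn
  by_contra hc
  exact hn (hlarge n (by simpa [Set.mem_Iio, not_lt] using hc))

/-- Lemma B -/
lemma lemB (M : AddSubmonoid ℚ) (hMnt : M ≠ ⊥) (q : ℚ) (hq : 0 < q)
    (hA : ∀ m ∈ M, ∃ k : ℕ, m = (k : ℚ) * q) :
    ∃ S : AddSubmonoid ℕ, (∃ s ∈ S, s ≠ 0) ∧ Nonempty (↥M ≃+ ↥S) := by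
  have hq' : q ≠ 0 := ne_of_gt hq
  have hspec : ∀ x : ↥M, ((x : ℚ)) = ((((x:ℚ)/q).num.toNat : ℕ) : ℚ) * q := by
    intro x
    obtain ⟨k, hk⟩ := hA x x.2
    have h1 : (x:ℚ)/q = (k:ℚ) := by rw [hk, mul_div_cancel_right₀ _ hq']
    rw [h1, Rat.num_natCast, Int.toNat_natCast]
    exact hk
  set F : ↥M → ℕ := fun x => ((x:ℚ)/q).num.toNat with hF
  have hcast : ∀ x : ↥M, ((x : ℚ)) = ((F x : ℕ) : ℚ) * q := hspec
  have hFadd : ∀ x y : ↥M, F (x + y) = F x + F y := by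
    intro x y
    have h1 := hcast (x + y)
    have h2 := hcast x
    have h3 := hcast y
    have hco : ((x + y : ↥M) : ℚ) = (x:ℚ) + y := rfl
    have hqq : ((F (x+y) : ℕ) : ℚ) * q = (((F x : ℕ):ℚ) + ((F y : ℕ):ℚ)) * q := by
      rw [add_mul]; rw [hco] at h1; linarith
    have := mul_right_cancel₀ hq' hqq
    exact_mod_cast this
  have hF0 : F 0 = 0 := by
    have h1 := hcast 0
    have : ((F 0 : ℕ) : ℚ) * q = 0 := by
      rw [← h1]; rfl
    rcases mul_eq_zero.mp this with h | h
    · exact_mod_cast h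
    · exact absurd h hq'
  set f : ↥M →+ ℕ := { toFun := F, map_zero' := hF0, map_add' := hFadd } with hfdef
  have hfinj : Function.Injective f := by
    intro x y hxy
    apply Subtype.ext
    rw [hcast x, hcast y]
    show ((F x : ℕ) : ℚ) * q = ((F y : ℕ) : ℚ) * q
    have : F x = F y := hxy
    rw [this]
  refine ⟨AddMonoidHom.mrange f, ?_, ?_⟩
  · -- nontrivial
    have hex : ∃ x ∈ M, x ≠ 0 := by
      by_contra hc
      push_neg at hc
      exact hMnt ((AddSubmonoid.eq_bot_iff_forall M).mpr hc)
    obtain ⟨m₀, hm₀M, hm₀⟩ := hex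
    refine ⟨f ⟨m₀, hm₀M⟩, ⟨⟨m₀, hm₀M⟩, rfl⟩, ?_⟩
    intro h0
    apply hm₀
    have := hcast ⟨m₀, hm₀M⟩
    show (((⟨m₀, hm₀M⟩ : ↥M)) : ℚ) = 0
    rw [this]
    show ((F ⟨m₀, hm₀M⟩ : ℕ) : ℚ) * q = 0
    have hF0' : F ⟨m₀, hm₀M⟩ = 0 := h0
    rw [hF0']
    simp
  · refine ⟨AddEquiv.ofBijective f.mrangeRestrict ⟨?_, f.mrangeRestrict_surjective⟩⟩
    intro a b h
    exact hfinj (congrArg Subtype.val h)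

lemma lemD (M : AddSubmonoid ℚ) (N : AddSubmonoid ℕ)
    (hNfin : (Set.univ \ (N : Set ℕ)).Finite) (φ : ↥M ≃+ ↥N) : IsCMonoid M := by
  set ψ : ↥M →+ (Unit →₀ ℕ) :=
    (Finsupp.singleAddHom ()).comp ((N.subtype).comp φ.toAddMonoidHom) with hψ
  have hψapp : ∀ m : ↥M, ψ m = Finsupp.single () ((φ m : ℕ)) := fun m => rfl
  have hinj : Function.Injective ψ := by
    intro a b h
    rw [hψapp, hψapp] at h
    exact φ.injective (Subtype.ext (Finsupp.single_injective () h))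
  obtain ⟨B, hB⟩ : ∃ B : ℕ, ∀ n, B ≤ n → n ∈ N := by
    obtain ⟨B0, hB0⟩ := hNfin.bddAbove
    refine ⟨B0 + 1, fun n hn => ?_⟩
    by_contra h
    have h2 : n ∈ Set.univ \ (N : Set ℕ) := ⟨trivial, h⟩
    have := hB0 h2
    omega
  have hrange : ∀ f : Unit →₀ ℕ, f ∈ Set.range ψ ↔ f () ∈ N := by
    intro f
    constructor
    · rintro ⟨m, rfl⟩
      rw [hψapp, Finsupp.single_eq_same]
      exact (φ m).2
    · intro h
      refine ⟨φ.symm ⟨f (), h⟩, ?_⟩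
      rw [hψapp, AddEquiv.apply_symm_apply]
      show Finsupp.single () (f ()) = f
      have := Finsupp.unique_single f
      simpa using this.symm
  refine ⟨Unit, ψ, hinj, ?_⟩
  set g : ℕ → Set (Unit →₀ ℕ) := fun n => {d | n + d () ∈ N} with hg
  have hsub : {s : Set (Unit →₀ ℕ) | ∃ x, s = {d | x + d ∈ Set.range ψ}} ⊆ g '' Set.Iic B := by
    rintro s ⟨x, rfl⟩
    have hx : {d : Unit →₀ ℕ | x + d ∈ Set.range ψ} = g (x ()) := by
      ext d
      simp only [Set.mem_setOf_eq, hrange, Finsupp.add_apply, hg]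
    by_cases hxB : x () ≤ B
    · exact ⟨x (), hxB, hx.symm⟩
    · refine ⟨B, le_refl B, ?_⟩
      rw [hx]
      ext d
      simp only [hg, Set.mem_setOf_eq]
      exact iff_of_true (hB _ (by omega)) (hB _ (by omega))
  exact Set.Finite.subset ((Set.finite_Iic B).image g) hsub

/-- A nontrivial Puiseux monoid is a C-monoid iff it is isomorphic to a
numerical monoid. -/
theorem stmt19 (M : AddSubmonoid ℚ) (hM : IsPuiseux M) (hMnt : M ≠ ⊥) :
    IsCMonoid M ↔ ∃ N : AddSubmonoid ℕ, (Set.univ \ (N : Set ℕ)).Finite ∧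
      Nonempty (↥M ≃+ ↥N) := by
  constructor
  · intro h
    obtain ⟨q, hq, hA⟩ := lemA M hM hMnt h
    obtain ⟨S, hSnt, ⟨iso1⟩⟩ := lemB M hMnt q hq hA
    obtain ⟨N, hNfin, ⟨iso2⟩⟩ := lemC S hSnt
    exact ⟨N, hNfin, ⟨iso1.trans iso2⟩⟩
  · rintro ⟨N, hNfin, ⟨φ⟩⟩
    exact lemD M N hNfin φ
end
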